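/- arXiv:1310.2320 — 4 statements merged into one kernel-verified Lean document; each statement's English description precedes it below -/
import Mathlib

section
/- Let X and Y be sets, S ⊆ X × 𝒟(Y) a relation, and (αᵢ) a countable family of nonnegative reals with Σᵢ αᵢ = 1. If (Δᵢ,Θᵢ) ∈ S̄ for every i, then (Σᵢ αᵢ Δᵢ, Σᵢ αᵢ Θᵢ) ∈ S̄. -/
open Classical

namespace PCKA

/-- A bundle event structure over event universe `Ev` and alphabet `A`:
a set of events, a conflict relation, a bundle relation, a partial labelling
(modelled via `Option`) and a set of final events. -/
structure BES (Ev A : Type) where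
  E : Set Ev
  conflict : Ev → Ev → Prop
  bundle : Set Ev → Ev → Prop
  lab : Ev → Option A
  final : Set Ev

variable {Ev A : Type}

/-- Well-formedness of a bundle event structure. -/
def IsBES (ℰ : BES Ev A) : Prop :=
  (∀ e, ¬ ℰ.conflict e e) ∧
  (∀ e e', ℰ.conflict e e' → ℰ.conflict e' e) ∧
  (∀ e e', ℰ.conflict e e' → e ∈ ℰ.E ∧ e' ∈ ℰ.E) ∧
  (∀ x e, ℰ.bundle x e → e ∈ ℰ.E ∧ x ⊆ ℰ.E ∧
    ∀ a ∈ x, ∀ b ∈ x, a ≠ b → ℰ.conflict a b) ∧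
  (∀ e, ℰ.lab e ≠ none → e ∈ ℰ.E) ∧
  ℰ.final ⊆ ℰ.E ∧
  (∀ a ∈ ℰ.final, ∀ b ∈ ℰ.final, a ≠ b → ℰ.conflict a b)

/-- `α` is an event trace of `ℰ`: every event is enabled by each of its bundles
and is distinct from and conflict-free with all earlier events. -/
def IsTrace (ℰ : BES Ev A) (α : List Ev) : Prop :=
  ∀ l e r, α = l ++ e :: r →
    e ∈ ℰ.E ∧
    (∀ x, ℰ.bundle x e → ∃ e' ∈ l, e' ∈ x) ∧
    (∀ e' ∈ l, e ≠ e' ∧ ¬ ℰ.conflict e e')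

/-- A configuration is the set of events of some event trace (a linearisation). -/
def IsConfig (ℰ : BES Ev A) (x : Set Ev) : Prop :=
  ∃ α : List Ev, IsTrace ℰ α ∧ {e | e ∈ α} = x

/-- Adjacent occurrences in a list. -/
def traceAdj (α : List Ev) (a b : Ev) : Prop := ∃ l r, α = l ++ a :: b :: r

/-- The order `≼_α` induced by an event trace: reflexive transitive closure of
adjacency in the trace. -/
def traceOrder (α : List Ev) : Ev → Ev → Prop := Relation.ReflTransGen (traceAdj α)

/-- The causal order `≼_x` of a configuration: the intersection of the orders
of all its linearisations. -/
def configOrder (ℰ : BES Ev A) (x : Set Ev) (a b : Ev) : Prop :=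
  ∀ α, IsTrace ℰ α → {e | e ∈ α} = x → traceOrder α a b

/-- The labelling restricted to a set of events. -/
noncomputable def labOn (ℰ : BES Ev A) (x : Set Ev) : Ev → Option A :=
  fun e => if e ∈ x then ℰ.lab e else none

/-- `(x, o, l)` is the lposet of the configuration `x` of `ℰ`. -/
def IsLposetOf (ℰ : BES Ev A) (x : Set Ev) (o : Ev → Ev → Prop)
    (l : Ev → Option A) : Prop :=
  IsConfig ℰ x ∧
  (∀ a b, o a b ↔ (a ∈ x ∧ b ∈ x ∧ configOrder ℰ x a b)) ∧
  l = labOn ℰ x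

/-- The lposet `(x,ox,lx)` is a prefix of the lposet `(y,oy,ly)`. -/
def LposetPrefix (x : Set Ev) (ox : Ev → Ev → Prop) (lx : Ev → Option A)
    (y : Set Ev) (oy : Ev → Ev → Prop) (ly : Ev → Option A) : Prop :=
  x ⊆ y ∧
  (∀ e ∈ x, ly e = lx e) ∧
  (∀ e e', oy e e' → e' ∈ x → e ∈ x ∧ ox e e')

/-- Restriction of a list to the elements of a set (the subsequence `α|_x`). -/
noncomputable def listRestrict (α : List Ev) (x : Set Ev) : List Ev :=
  α.filter (fun e => decide (e ∈ x))

/-- The sub-BES order `ℰ ⊑ ℱ`. -/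
def SubBES (ℰ ℱ : BES Ev A) : Prop :=
  ℰ.E ⊆ ℱ.E ∧
  (∀ e e', ℰ.conflict e e' ↔ (ℱ.conflict e e' ∧ e ∈ ℰ.E ∧ e' ∈ ℰ.E)) ∧
  (∀ x e, ℰ.bundle x e → ℱ.bundle x e) ∧
  (∀ x e, ℱ.bundle x e → e ∈ ℰ.E → x ⊆ ℰ.E ∧ ℰ.bundle x e) ∧
  (∀ e ∈ ℰ.E, ℰ.lab e = ℱ.lab e) ∧
  (∀ e, e ∈ ℰ.final ↔ (e ∈ ℱ.final ∧ e ∈ ℰ.E))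

/-- `ℰ` is the componentwise union of the chain `c`. -/
def IsChainUnion (c : ℕ → BES Ev A) (ℰ : BES Ev A) : Prop :=
  ℰ.E = (⋃ i, (c i).E) ∧
  (∀ e e', ℰ.conflict e e' ↔ ∃ i, (c i).conflict e e') ∧
  (∀ x e, ℰ.bundle x e ↔ ∃ i, (c i).bundle x e) ∧
  (∀ i, ∀ e ∈ (c i).E, ℰ.lab e = (c i).lab e) ∧
  (∀ e, e ∉ (⋃ i, (c i).E) → ℰ.lab e = none) ∧
  ℰ.final = (⋃ i, (c i).final)

/-- Immediate conflict. -/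
def ImmConflict (ℰ : BES Ev A) (e e' : Ev) : Prop :=
  ℰ.conflict e e' ∧
  ∃ x, IsConfig ℰ x ∧ IsConfig ℰ (x ∪ {e}) ∧ IsConfig ℰ (x ∪ {e'})

/-- A partial cluster: pairwise immediately conflicting, equally pointed events. -/
def PartialCluster (ℰ : BES Ev A) (K : Set Ev) : Prop :=
  K ⊆ ℰ.E ∧
  (∀ e ∈ K, ∀ e' ∈ K, e ≠ e' → ImmConflict ℰ e e') ∧
  (∀ e ∈ K, ∀ e' ∈ K, ∀ x, ℰ.bundle x e → ℰ.bundle x e')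

/-- A cluster is a maximal partial cluster. -/
def Cluster (ℰ : BES Ev A) (K : Set Ev) : Prop :=
  PartialCluster ℰ K ∧ ∀ H, PartialCluster ℰ H → K ⊆ H → H = K

/-- `⟨e⟩`: the intersection of all clusters containing `e`. -/
def cell (ℰ : BES Ev A) (e : Ev) : Set Ev :=
  ⋂₀ {K | Cluster ℰ K ∧ e ∈ K}

/-- `cfl x`: events in conflict with some event of `x`. -/
def cfl (ℰ : BES Ev A) (x : Set Ev) : Set Ev :=
  {e | e ∈ ℰ.E ∧ ∃ e' ∈ x, ℰ.conflict e e'}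

/-- Confusion freeness. -/
def ConfusionFree (ℰ : BES Ev A) : Prop :=
  (∀ e e', ImmConflict ℰ e e' → e ∈ cell ℰ e') ∧
  (∀ x e, IsConfig ℰ x → cell ℰ e ∩ x = ∅ → IsConfig ℰ (x ∪ {e}) →
    ∀ e'' ∈ cell ℰ e, IsConfig ℰ (x ∪ {e''}))

/-- Initial events: those pointed by no bundle. -/
def bInit (ℰ : BES Ev A) : Set Ev :=
  {e | e ∈ ℰ.E ∧ ∀ x, ¬ ℰ.bundle x e}

/-- Nondeterministic choice `ℰ + ℱ` (for disjoint BES). -/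
def bchoice (ℰ ℱ : BES Ev A) : BES Ev A where
  E := ℰ.E ∪ ℱ.E
  conflict := fun e e' => ℰ.conflict e e' ∨ ℱ.conflict e e' ∨
    (e ∈ bInit ℰ ∧ e' ∈ bInit ℱ) ∨ (e ∈ bInit ℱ ∧ e' ∈ bInit ℰ) ∨
    (e ∈ ℰ.final ∧ e' ∈ ℱ.final) ∨ (e ∈ ℱ.final ∧ e' ∈ ℰ.final)
  bundle := fun x e => ℰ.bundle x e ∨ ℱ.bundle x e
  lab := fun e => (ℰ.lab e).orElse (fun _ => ℱ.lab e)
  final := ℰ.final ∪ ℱ.final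

/-- Sequential composition `ℰ · ℱ` (for disjoint BES). -/
def bseq (ℰ ℱ : BES Ev A) : BES Ev A where
  E := ℰ.E ∪ ℱ.E
  conflict := fun e e' => ℰ.conflict e e' ∨ ℱ.conflict e e'
  bundle := fun x e => ℰ.bundle x e ∨ ℱ.bundle x e ∨ (x = ℰ.final ∧ e ∈ bInit ℱ)
  lab := fun e => (ℰ.lab e).orElse (fun _ => ℱ.lab e)
  final := ℱ.final

/-- Concurrent composition `ℰ ‖ ℱ` with fresh delimiter events `d₁, d₂`. -/
def bpar (ℰ ℱ : BES Ev A) (d₁ d₂ : Ev) : BES Ev A where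
  E := ℰ.E ∪ ℱ.E ∪ {d₁, d₂}
  conflict := fun e e' => ℰ.conflict e e' ∨ ℱ.conflict e e'
  bundle := fun x e => ℰ.bundle x e ∨ ℱ.bundle x e ∨
    (x = {d₁} ∧ (e ∈ bInit ℰ ∨ e ∈ bInit ℱ)) ∨
    (x = ℰ.final ∧ e = d₂) ∨ (x = ℱ.final ∧ e = d₂)
  lab := fun e => (ℰ.lab e).orElse (fun _ => ℱ.lab e)
  final := {d₂}

/-- Renaming of a BES along a map of events. -/
noncomputable def brename (g : Ev → Ev) (ℰ : BES Ev A) : BES Ev A where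
  E := g '' ℰ.E
  conflict := fun e e' => ∃ a b, ℰ.conflict a b ∧ e = g a ∧ e' = g b
  bundle := fun x e => ∃ y a, ℰ.bundle y a ∧ x = g '' y ∧ e = g a
  lab := fun e => if h : ∃ a, a ∈ ℰ.E ∧ g a = e then ℰ.lab h.choose else none
  final := g '' ℰ.final

/-- `ℰ'` is a (fresh) copy of `ℰ`. -/
def IsCopy (ℰ' ℰ : BES Ev A) : Prop :=
  ∃ g : Ev → Ev, Set.InjOn g ℰ.E ∧ ℰ' = brename g ℰ

/-- `𝒮` is the binary Kleene product `ℰ * ℱ`: the componentwise union of the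
chain `ℱ ⊑ ℱ + ℰ·ℱ ⊑ ⋯` built with fresh disjoint copies at each stage. -/
def IsStarOf (ℰ ℱ 𝒮 : BES Ev A) : Prop :=
  ∃ c : ℕ → BES Ev A,
    IsCopy (c 0) ℱ ∧
    (∀ i, ∃ ℰ' ℱ' : BES Ev A, IsCopy ℰ' ℰ ∧ IsCopy ℱ' ℱ ∧
      ℱ'.E ∩ (ℰ'.E ∪ (c i).E) = ∅ ∧ ℰ'.E ∩ (c i).E = ∅ ∧
      c (i + 1) = bchoice ℱ' (bseq ℰ' (c i)) ∧
      SubBES (c i) (c (i + 1))) ∧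
    IsChainUnion c 𝒮

/-- The basic BES `0` (deadlock). -/
def besZero : BES Ev A :=
  ⟨∅, fun _ _ => False, fun _ _ => False, fun _ => none, ∅⟩

/-- The basic BES `1` (skip), with a single unlabelled final event. -/
def besOne (e : Ev) : BES Ev A :=
  ⟨{e}, fun _ _ => False, fun _ _ => False, fun _ => none, {e}⟩

/-- The basic BES for a one-step action `a`. -/
noncomputable def besAct (e : Ev) (a : A) : BES Ev A :=
  ⟨{e}, fun _ _ => False, fun _ _ => False,
    fun e' => if e' = e then some a else none, {e}⟩

/-- Regular BES: built from the basic BES by `+`, `·`, `‖` and `*`. -/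
inductive Regular : BES Ev A → Prop
  | zero : Regular besZero
  | one (e : Ev) : Regular (besOne e)
  | act (e : Ev) (a : A) : Regular (besAct e a)
  | choice {ℰ ℱ : BES Ev A} : Regular ℰ → Regular ℱ → ℰ.E ∩ ℱ.E = ∅ →
      Regular (bchoice ℰ ℱ)
  | seq {ℰ ℱ : BES Ev A} : Regular ℰ → Regular ℱ → ℰ.E ∩ ℱ.E = ∅ →
      Regular (bseq ℰ ℱ)
  | par {ℰ ℱ : BES Ev A} (d₁ d₂ : Ev) : Regular ℰ → Regular ℱ →
      ℰ.E ∩ ℱ.E = ∅ → d₁ ≠ d₂ → d₁ ∉ ℰ.E ∪ ℱ.E → d₂ ∉ ℰ.E ∪ ℱ.E →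
      Regular (bpar ℰ ℱ d₁ d₂)
  | star {ℰ ℱ 𝒮 : BES Ev A} : Regular ℰ → Regular ℱ → IsStarOf ℰ ℱ 𝒮 →
      Regular 𝒮

/-- A probability distribution on a BES: a discrete distribution on events
whose support is contained in a single cell `⟨e⟩`. -/
def IsDistOn (ℰ : BES Ev A) (p : PMF Ev) : Prop :=
  ∃ e ∈ ℰ.E, p.support ⊆ cell ℰ e

/-- A probabilistic bundle event structure: a BES with a set of distributions. -/
structure PBES (Ev A : Type) where
  bes : BES Ev A
  dists : Set (PMF Ev)

/-- Well-formedness of a probabilistic BES. -/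
def IsPBES (P : PBES Ev A) : Prop :=
  IsBES P.bes ∧ ConfusionFree P.bes ∧
  (∀ p ∈ P.dists, IsDistOn P.bes p) ∧
  (∀ e ∈ P.bes.E, ∃ p ∈ P.dists, e ∈ p.support)

/-- No bundle set contains a final event. -/
def NoFinalBundle (ℰ : BES Ev A) : Prop :=
  ∀ x e, ℰ.bundle x e → x ∩ ℰ.final = ∅

/-- Probabilistic prefix: `x ⊑ Δ` iff `Δ = Σ_{e ∈ supp p} p e · δ_{x ∪ {e}}`
for some `p` in the distribution set, with `supp p` disjoint from `x` and all
extensions configurations. -/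
def ProbPrefix (P : PBES Ev A) (x : Set Ev) (Δ : PMF (Set Ev)) : Prop :=
  IsConfig P.bes x ∧
  ∃ p ∈ P.dists, p.support ∩ x = ∅ ∧
    (∀ e ∈ p.support, IsConfig P.bes (x ∪ {e})) ∧
    Δ = p.bind (fun e => PMF.pure (x ∪ {e}))

/-- Lifting of a relation `S ⊆ X × 𝒟(Y)` to `𝒟(X) × 𝒟(Y)`. -/
def Lift {X Y : Type} (S : X → PMF Y → Prop) (Δ : PMF X) (Θ : PMF Y) : Prop :=
  ∃ (ι : Type) (_ : Countable ι) (w : PMF ι) (xs : ι → X) (Θs : ι → PMF Y),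
    Δ = w.bind (fun i => PMF.pure (xs i)) ∧
    (∀ i, w i ≠ 0 → S (xs i) (Θs i)) ∧
    Θ = w.bind Θs

/-- The labelled events of a configuration. -/
def hatSet (ℰ : BES Ev A) (x : Set Ev) : Set Ev :=
  {e | e ∈ x ∧ ℰ.lab e ≠ none}

/-- Implementation (subsumption) `x ⊑_s y` between configurations: a
label-preserving monotonic bijection from the labelled events of `y` to those
of `x`. -/
def Subsum (ℰ : BES Ev A) (x : Set Ev) (ℱ : BES Ev A) (y : Set Ev) : Prop :=
  ∃ f : Ev → Ev, Set.BijOn f (hatSet ℱ y) (hatSet ℰ x) ∧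
    (∀ e ∈ hatSet ℱ y, ℰ.lab (f e) = ℱ.lab e) ∧
    (∀ e e', e ∈ hatSet ℱ y → e' ∈ hatSet ℱ y →
      configOrder ℱ y e e' → configOrder ℰ x (f e) (f e'))

/-- Probabilistic simulation from `P` to `Q`. -/
def IsSimulation (P Q : PBES Ev A) (S : Set Ev → PMF (Set Ev) → Prop) : Prop :=
  S ∅ (PMF.pure ∅) ∧
  (∀ x Θ, S x Θ → IsConfig P.bes x ∧
    ∀ y ∈ Θ.support, IsConfig Q.bes y ∧ Subsum P.bes x Q.bes y) ∧
  (∀ x Θ Δ', S x Θ → ProbPrefix P x Δ' →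
    ∃ Θ', Relation.ReflTransGen (Lift (ProbPrefix Q)) Θ Θ' ∧ Lift S Δ' Θ') ∧
  (∀ x Θ, S x Θ → (x ∩ P.bes.final).Nonempty →
    ∀ y ∈ Θ.support, (y ∩ Q.bes.final).Nonempty)

/-- `P ⊑ Q`: there exists a probabilistic simulation from `P` to `Q`. -/
def Sim (P Q : PBES Ev A) : Prop := ∃ S, IsSimulation P Q S

/-- Nondeterministic choice of pBES. -/
def pch (P Q : PBES Ev A) : PBES Ev A :=
  ⟨bchoice P.bes Q.bes, P.dists ∪ Q.dists⟩

/-- Sequential composition of pBES. -/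
def pseq (P Q : PBES Ev A) : PBES Ev A :=
  ⟨bseq P.bes Q.bes, P.dists ∪ Q.dists⟩

/-- Concurrent composition of pBES with fresh delimiters `d₁, d₂`. -/
noncomputable def ppar (P Q : PBES Ev A) (d₁ d₂ : Ev) : PBES Ev A :=
  ⟨bpar P.bes Q.bes d₁ d₂, P.dists ∪ Q.dists ∪ {PMF.pure d₁, PMF.pure d₂}⟩

/-- The sub-pBES order. -/
def SubPBES (P Q : PBES Ev A) : Prop :=
  SubBES P.bes Q.bes ∧ P.dists = {p | p ∈ Q.dists ∧ p.support ⊆ P.bes.E}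

/-- Renaming of a pBES. -/
noncomputable def prename (g : Ev → Ev) (P : PBES Ev A) : PBES Ev A :=
  ⟨brename g P.bes, (fun p => p.map g) '' P.dists⟩

/-- `P'` is a (fresh) copy of the pBES `P`. -/
def IsPCopy (P' P : PBES Ev A) : Prop :=
  ∃ g : Ev → Ev, Set.InjOn g P.bes.E ∧ P' = prename g P

/-- Componentwise union of a chain of pBES. -/
def IsPChainUnion (c : ℕ → PBES Ev A) (P : PBES Ev A) : Prop :=
  IsChainUnion (fun i => (c i).bes) P.bes ∧ P.dists = ⋃ i, (c i).dists

/-- `S` is the binary Kleene product `P * G` of pBES. -/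
def IsPStarOf (P G S : PBES Ev A) : Prop :=
  ∃ c : ℕ → PBES Ev A,
    IsPCopy (c 0) G ∧
    (∀ i, ∃ P' G' : PBES Ev A, IsPCopy P' P ∧ IsPCopy G' G ∧
      G'.bes.E ∩ (P'.bes.E ∪ (c i).bes.E) = ∅ ∧ P'.bes.E ∩ (c i).bes.E = ∅ ∧
      c (i + 1) = pch G' (pseq P' (c i)) ∧
      SubPBES (c i) (c (i + 1))) ∧
    IsPChainUnion c S

end PCKA

/-! Concatenate the decompositions: if `Δᵢ = Σⱼ wᵢⱼ δ_{xᵢⱼ}` and `Θᵢ = Σⱼ wᵢⱼ Θᵢⱼ`, then the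
pairs `(i, j)`, weighted by `w i * wᵢⱼ`, decompose `Σᵢ w i Δᵢ` and `Σᵢ w i Θᵢ` in the same way. -/

namespace PMF

variable {ι β : Type} {κ : ι → Type}

noncomputable def sigma (w : PMF ι) (ws : ∀ i, PMF (κ i)) : PMF (Σ i, κ i) :=
  w.bind fun i => (ws i).map (Sigma.mk i)

theorem sigma_bind (w : PMF ι) (ws : ∀ i, PMF (κ i)) (f : (Σ i, κ i) → PMF β) :
    (w.sigma ws).bind f = w.bind fun i => (ws i).bind fun j => f ⟨i, j⟩ := by
  simp only [sigma, bind_bind, bind_map]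
  rfl

theorem mem_support_sigma_iff (w : PMF ι) (ws : ∀ i, PMF (κ i)) (i : ι) (j : κ i) :
    ⟨i, j⟩ ∈ (w.sigma ws).support ↔ i ∈ w.support ∧ j ∈ (ws i).support := by
  simp only [sigma, mem_support_bind_iff, mem_support_map_iff, Sigma.mk.injEq]
  constructor
  · rintro ⟨i', hi', j', hj', rfl, hjj⟩
    exact ⟨hi', eq_of_heq hjj ▸ hj'⟩
  · rintro ⟨hi, hj⟩
    exact ⟨i, hi, j, hj, rfl, HEq.rfl⟩

end PMF

namespace PCKA

/-- Proposition 7 (first part): the lifting of a relation is closed under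
countable convex combinations. -/
theorem lift_linear {X Y ι : Type} [Countable ι] (S : X → PMF Y → Prop)
    (w : PMF ι) (Δs : ι → PMF X) (Θs : ι → PMF Y)
    (h : ∀ i, Lift S (Δs i) (Θs i)) :
    Lift S (w.bind Δs) (w.bind Θs) := by
  choose κ hκ ws xs θs hΔ hS hΘ using h
  refine ⟨Σ i, κ i, inferInstance, w.sigma ws, fun p => xs p.1 p.2, fun p => θs p.1 p.2,
    ?_, ?_, ?_⟩
  · rw [PMF.sigma_bind]
    exact congrArg w.bind (funext hΔ)
  · rintro ⟨i, j⟩ hij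
    exact hS i j ((PMF.mem_support_sigma_iff w ws i j).1 hij).2
  · rw [PMF.sigma_bind]
    exact congrArg w.bind (funext hΘ)

end PCKA
end

section
/- Let X and Y be sets, S ⊆ X × 𝒟(Y) a relation, and (αᵢ) a countable family of strictly positive reals with Σᵢ αᵢ = 1. If (Σᵢ αᵢ Δᵢ, Θ) ∈ S̄ for distributions Δᵢ ∈ 𝒟(X) and Θ ∈ 𝒟(Y), then there exists a family of distributions Θᵢ ∈ 𝒟(Y) such that (Δᵢ,Θᵢ) ∈ S̄ for every i and Θ = Σᵢ αᵢ Θᵢ. -/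
open Classical

/-!
Write the lifted pair as `Δ = Σⱼ vⱼ δ_{xⱼ}` and `Θ = Σⱼ vⱼ Θⱼ`, where `Δ = Σᵢ wᵢ Δᵢ`. Conditioning
`v` on the fibres of `j ↦ xⱼ` gives a disintegration `K` of `v`: `Σₓ Δ(x) K x = v`, and `K x`
lives on the fibre over `x`. Then `uᵢ := Σₓ Δᵢ(x) K x` reweights the family `(xⱼ, Θⱼ)` so that
`Σⱼ uᵢⱼ δ_{xⱼ} = Δᵢ`, while `Σᵢ wᵢ uᵢ = v`; hence `Θᵢ := Σⱼ uᵢⱼ Θⱼ` averages to `Θ`. Since every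
`wᵢ` is positive, `uᵢⱼ > 0` forces `vⱼ > 0`, so only pairs `(xⱼ, Θⱼ)` in `S` are used.
-/

namespace PMF

variable {α β : Type*}

theorem eq_pure_of_support_subset {p : PMF α} {a : α} (h : p.support ⊆ {a}) : p = PMF.pure a := by
  ext b
  by_cases hb : b = a
  · subst hb
    rw [pure_apply_self, apply_eq_one_iff]
    exact p.support_nonempty.subset_singleton_iff.1 h
  · rw [pure_apply_of_ne _ _ hb, apply_eq_zero_iff]
    exact fun hb' => hb (h hb')

theorem exists_mem_fiber_of_mem_support_map {p : PMF α} {f : α → β} {b : β}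
    (hb : b ∈ (p.map f).support) : ∃ a ∈ f ⁻¹' {b}, a ∈ p.support := by
  obtain ⟨a, ha, rfl⟩ := (mem_support_map_iff f p b).1 hb
  exact ⟨a, rfl, ha⟩

/-- `p` conditioned on the fibre `f ⁻¹' {b}`; off the support of `p.map f` the value `p` is junk. -/
noncomputable def condOnFiber (p : PMF α) (f : α → β) (b : β) : PMF α :=
  if hb : b ∈ (p.map f).support then p.filter (f ⁻¹' {b}) (exists_mem_fiber_of_mem_support_map hb)
  else p

theorem condOnFiber_apply {p : PMF α} {f : α → β} {b : β} (hb : b ∈ (p.map f).support) (a : α) :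
    p.condOnFiber f b a = (f ⁻¹' {b}).indicator p a * (p.map f b)⁻¹ := by
  rw [condOnFiber, dif_pos hb, filter_apply, ← toOuterMeasure_apply, ← toOuterMeasure_map_apply,
    toOuterMeasure_apply_singleton]

theorem map_apply_mul_condOnFiber_apply (p : PMF α) (f : α → β) (b : β) (a : α) :
    p.map f b * p.condOnFiber f b a = if b = f a then p a else 0 := by
  by_cases hb : b ∈ (p.map f).support
  · rw [condOnFiber_apply hb, mul_left_comm, ENNReal.mul_inv_cancel hb (apply_ne_top _ _),
      mul_one, Set.indicator_apply, Set.mem_preimage, Set.mem_singleton_iff]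
    exact if_congr eq_comm rfl rfl
  · rw [(apply_eq_zero_iff _ b).2 hb, zero_mul, eq_comm, ite_eq_right_iff]
    exact fun hab => (apply_eq_zero_iff p a).2 fun ha =>
      hb ((mem_support_map_iff f p b).2 ⟨a, ha, hab.symm⟩)

theorem bind_condOnFiber (p : PMF α) (f : α → β) : (p.map f).bind (p.condOnFiber f) = p := by
  ext a
  simp only [bind_apply, map_apply_mul_condOnFiber_apply, tsum_ite_eq]

theorem map_condOnFiber {p : PMF α} {f : α → β} {b : β} (hb : b ∈ (p.map f).support) :
    (p.condOnFiber f b).map f = PMF.pure b := by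
  refine eq_pure_of_support_subset ?_
  rw [support_map]
  rintro _ ⟨a, ha, rfl⟩
  rw [condOnFiber, dif_pos hb, support_filter] at ha
  exact ha.1

theorem map_bind_condOnFiber {p : PMF α} {f : α → β} {q : PMF β}
    (hq : q.support ⊆ (p.map f).support) : (q.bind (p.condOnFiber f)).map f = q := by
  rw [map_bind]
  conv_rhs => rw [← bind_pure q]
  ext b
  simp only [bind_apply]
  refine tsum_congr fun c => ?_
  by_cases hc : c ∈ q.support
  · rw [map_condOnFiber (hq hc)]
  · rw [(apply_eq_zero_iff q c).2 hc, zero_mul, zero_mul]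

end PMF

namespace PCKA

theorem lift_decompose_general {X Y ι : Type} (S : X → PMF Y → Prop)
    (w : PMF ι) (hw : ∀ i, w i ≠ 0) (Δs : ι → PMF X) (Θ : PMF Y)
    (h : Lift S (w.bind Δs) Θ) :
    ∃ Θs : ι → PMF Y, (∀ i, Lift S (Δs i) (Θs i)) ∧ Θ = w.bind Θs := by
  obtain ⟨κ, hκ, v, xs, Θs, hΔ, hS, rfl⟩ := h
  change w.bind Δs = v.map xs at hΔ
  set u : ι → PMF κ := fun i => (Δs i).bind (v.condOnFiber xs)
  have hu : w.bind u = v := by rw [← PMF.bind_bind, hΔ, PMF.bind_condOnFiber]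
  refine ⟨fun i => (u i).bind Θs, fun i => ⟨κ, hκ, u i, xs, Θs, ?_, fun j hj => hS j ?_, rfl⟩, ?_⟩
  · change Δs i = (u i).map xs
    rw [PMF.map_bind_condOnFiber]
    intro x hx
    rw [← hΔ, PMF.mem_support_bind_iff]
    exact ⟨i, hw i, hx⟩
  · rw [← PMF.mem_support_iff, ← hu, PMF.mem_support_bind_iff]
    exact ⟨i, hw i, hj⟩
  · rw [← hu, PMF.bind_bind]

/-- Proposition 7 (second part): a lifted pair whose left component is a
countable convex combination with strictly positive weights decomposes. -/
theorem lift_decompose {X Y ι : Type} [Countable ι] (S : X → PMF Y → Prop)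
    (w : PMF ι) (hw : ∀ i, w i ≠ 0) (Δs : ι → PMF X) (Θ : PMF Y)
    (h : Lift S (w.bind Δs) Θ) :
    ∃ Θs : ι → PMF Y, (∀ i, Lift S (Δs i) (Θs i)) ∧ Θ = w.bind Θs :=
  lift_decompose_general S w hw Δs Θ h

end PCKA
end

section
/- Every regular bundle event structure (i.e. one built from the basic BES 0, 1 and a (a ∈ Σ) by finitely many applications of the operations +, ·, ‖ and *) is confusion free. -/
open Classical

namespace PCKA

variable {Ev A : Type}

set_option linter.dupNamespace false
set_option maxHeartbeats 1000000

/-- Equal bundle sets. -/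
def SameB (ℰ : BES Ev A) (e e' : Ev) : Prop := ∀ x, ℰ.bundle x e ↔ ℰ.bundle x e'

lemma SameB.refl' (ℰ : BES Ev A) (e : Ev) : SameB ℰ e e := fun _ => Iff.rfl
lemma SameB.symm' {ℰ : BES Ev A} {e e' : Ev} (h : SameB ℰ e e') : SameB ℰ e' e :=
  fun x => (h x).symm
lemma SameB.trans' {ℰ : BES Ev A} {e e' e'' : Ev} (h : SameB ℰ e e') (h' : SameB ℰ e' e'') :
    SameB ℰ e e'' := fun x => (h x).trans (h' x)

/-- Two events which can never coexist in a configuration, witnessed syntactically. -/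
inductive Bad2 (ℰ : BES Ev A) : Ev → Ev → Prop
  | conf {f g} : ℰ.conflict f g → Bad2 ℰ f g
  | left {f g} (x : Set Ev) : ℰ.bundle x f → (∀ f' ∈ x, Bad2 ℰ f' g) → Bad2 ℰ f g
  | right {f g} (y : Set Ev) : ℰ.bundle y g → (∀ g' ∈ y, Bad2 ℰ f g') → Bad2 ℰ f g

/-- Syntactic witness that `e` and `e'` can never be co-enabled. -/
def NCE (ℰ : BES Ev A) (e e' : Ev) : Prop :=
  (∃ x, ℰ.bundle x e ∧ ∀ f ∈ x, f = e' ∨ Bad2 ℰ f e') ∨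
  (∃ y, ℰ.bundle y e' ∧ ∀ g ∈ y, g = e ∨ Bad2 ℰ g e) ∨
  (∃ x y, ℰ.bundle x e ∧ ℰ.bundle y e' ∧
    ∀ f ∈ x, ∀ g ∈ y, f = e' ∨ g = e ∨ Bad2 ℰ f e' ∨ Bad2 ℰ g e ∨ Bad2 ℰ f g)

/-- Causal predecessor via a bundle. -/
def prec (ℰ : BES Ev A) (f e : Ev) : Prop := ∃ x, ℰ.bundle x e ∧ f ∈ x

/-- The inductive invariant. -/
structure Inv (ℰ : BES Ev A) : Prop where
  irrefl : ∀ e, ¬ ℰ.conflict e e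
  symm : ∀ e e', ℰ.conflict e e' → ℰ.conflict e' e
  confE : ∀ e e', ℰ.conflict e e' → e ∈ ℰ.E ∧ e' ∈ ℰ.E
  bunE : ∀ x e, ℰ.bundle x e → e ∈ ℰ.E ∧ x ⊆ ℰ.E
  finE : ℰ.final ⊆ ℰ.E
  p3 : ∀ x e, ℰ.bundle x e → ∀ f ∈ x, ¬ ℰ.conflict e f
  wf : ∀ e, Acc (prec ℰ) e
  pinit : ∀ e ∈ bInit ℰ, ∀ f ∈ bInit ℰ, e ≠ f → ℰ.conflict e f
  p2 : ∀ e1 e2 e3, ℰ.conflict e1 e2 → ℰ.conflict e2 e3 → SameB ℰ e1 e2 →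
       SameB ℰ e2 e3 → e1 ≠ e3 → ¬ ℰ.bundle ∅ e1 → ℰ.conflict e1 e3
  p1 : ∀ e e', ℰ.conflict e e' → SameB ℰ e e' ∨ NCE ℰ e e'

section Generic
variable {ℰ : BES Ev A}

lemma trace_mem_E {α : List Ev} (h : IsTrace ℰ α) {e : Ev} (he : e ∈ α) : e ∈ ℰ.E := by
  obtain ⟨l, r, rfl⟩ := List.append_of_mem he
  exact (h l e r rfl).1

lemma trace_bundle_mem {α l r : List Ev} {e : Ev} (h : IsTrace ℰ α)
    (hd : α = l ++ e :: r) {x : Set Ev} (hx : ℰ.bundle x e) : ∃ f ∈ l, f ∈ x :=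
  (h l e r hd).2.1 x hx

lemma config_no_conflict (hI : Inv ℰ)
    {x : Set Ev} (hx : IsConfig ℰ x) {f g : Ev} (hf : f ∈ x) (hg : g ∈ x)
    (hc : ℰ.conflict f g) : False := by
  obtain ⟨α, hα, hset⟩ := hx
  have hf' : f ∈ α := by rw [← hset] at hf; exact hf
  have hg' : g ∈ α := by rw [← hset] at hg; exact hg
  obtain ⟨l, r, rfl⟩ := List.append_of_mem hf'
  rcases List.mem_append.1 hg' with hgl | hgr
  · exact ((hα l f r rfl).2.2 g hgl).2 hc
  · rcases List.mem_cons.1 hgr with h | hgr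
    · subst h; exact hI.irrefl _ hc
    · obtain ⟨l2, r2, rfl⟩ := List.append_of_mem hgr
      have := (hα (l ++ f :: l2) g r2 (by simp)).2.2 f (by simp)
      exact this.2 (hI.symm _ _ hc)

/-- In any configuration containing `f`, every bundle of `f` is met by the
configuration. -/
lemma config_bundle_met {x : Set Ev} (hx : IsConfig ℰ x) {f : Ev} (hf : f ∈ x)
    {y : Set Ev} (hy : ℰ.bundle y f) : ∃ g ∈ x, g ∈ y := by
  obtain ⟨α, hα, hset⟩ := hx
  have hf' : f ∈ α := by rw [← hset] at hf; exact hf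
  obtain ⟨l, r, rfl⟩ := List.append_of_mem hf'
  obtain ⟨g, hgl, hgy⟩ := trace_bundle_mem hα rfl hy
  exact ⟨g, by rw [← hset]; simp [hgl], hgy⟩

/-- If `x ∪ {e}` is a configuration and `e ∉ x`, every bundle of `e` meets `x`. -/
lemma ext_bundle_met {x : Set Ev} {e : Ev} (hx : IsConfig ℰ (x ∪ {e})) (he : e ∉ x)
    {y : Set Ev} (hy : ℰ.bundle y e) : ∃ g ∈ x, g ∈ y := by
  obtain ⟨α, hα, hset⟩ := hx
  have he' : e ∈ α := by
    have : e ∈ x ∪ {e} := by simp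
    rw [← hset] at this; exact this
  obtain ⟨l, r, rfl⟩ := List.append_of_mem he'
  obtain ⟨g, hgl, hgy⟩ := trace_bundle_mem hα rfl hy
  have hne : e ≠ g := ((hα l e r rfl).2.2 g hgl).1
  have : g ∈ x ∪ {e} := by rw [← hset]; simp [hgl]
  rcases this with hgx | hge
  · exact ⟨g, hgx, hgy⟩
  · exact absurd (Set.mem_singleton_iff.1 hge).symm hne

lemma ext_not_bundle_empty {x : Set Ev} {e : Ev} (hx : IsConfig ℰ (x ∪ {e}))
    (he : e ∉ x) : ¬ ℰ.bundle ∅ e := fun h => by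
  obtain ⟨g, _, hg⟩ := ext_bundle_met hx he h
  exact hg

lemma ext_mem_E {x : Set Ev} {e : Ev} (hx : IsConfig ℰ (x ∪ {e})) : e ∈ ℰ.E := by
  obtain ⟨α, hα, hset⟩ := hx
  have he : e ∈ {e' | e' ∈ α} := by rw [hset]; simp
  exact trace_mem_E hα he

/-- `Bad2` events never coexist in a configuration. -/
lemma Bad2.not_coexist (hI : Inv ℰ) {f g : Ev} (hb : Bad2 ℰ f g)
    {x : Set Ev} (hx : IsConfig ℰ x) (hf : f ∈ x) (hg : g ∈ x) : False := by
  induction hb with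
  | conf h => exact config_no_conflict hI hx hf hg h
  | left y hy _ ih =>
      obtain ⟨f', hf'x, hf'y⟩ := config_bundle_met hx hf hy
      exact ih f' hf'y hf'x hg
  | right y hy _ ih =>
      obtain ⟨g', hg'x, hg'y⟩ := config_bundle_met hx hg hy
      exact ih g' hg'y hf hg'x

/-- Appending an enabled, fresh, conflict-free event to a trace. -/
lemma trace_append {α : List Ev} (hα : IsTrace ℰ α) {e : Ev} (heE : e ∈ ℰ.E)
    (hen : ∀ y, ℰ.bundle y e → ∃ f ∈ α, f ∈ y) (hfresh : e ∉ α)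
    (hnc : ∀ f ∈ α, ¬ ℰ.conflict e f) : IsTrace ℰ (α ++ [e]) := by
  intro l f r hd
  rcases List.eq_nil_or_concat r with rfl | ⟨r', a, rfl⟩
  · have h1 : l = α ∧ f = e := by
      have := hd
      rw [show l ++ [f] = l ++ [f] from rfl] at this
      have hlen : (α ++ [e]).length = l.length + 1 := by rw [this]; simp
      constructor
      · exact List.append_inj_left' this.symm (by simp)
      · have h2 := List.append_inj_right' this.symm (by simp)
        simpa using h2
    obtain ⟨rfl, rfl⟩ := h1
    exact ⟨heE, fun y hy => hen y hy, fun f' hf' => ⟨fun h => hfresh (h ▸ hf'), hnc f' hf'⟩⟩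
  · have hd' : α ++ [e] = (l ++ f :: r') ++ [a] := by rw [hd]; simp
    have h1 : α = l ++ f :: r' ∧ e = a := by
      constructor
      · exact List.append_inj_left' hd' (by simp)
      · have h3 := List.append_inj_right' hd' (by simp)
        simpa using h3
    obtain ⟨h2, rfl⟩ := h1
    exact hα l f r' h2

end Generic
section Master
variable {ℰ : BES Ev A}

lemma imm_not_mem (hI : Inv ℰ) {e e' : Ev} {x : Set Ev} (hc : ℰ.conflict e e')
    (hxe' : IsConfig ℰ (x ∪ {e'})) : e ∉ x := fun hmem =>
  config_no_conflict hI hxe' (Set.mem_union_left _ hmem) (by simp) hc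

/-- Immediately conflicting events have the same bundles. -/
lemma imm_sameB (hI : Inv ℰ) {e e' : Ev} (h : ImmConflict ℰ e e') : SameB ℰ e e' := by
  obtain ⟨hc, x, hx, hxe, hxe'⟩ := h
  have hex : e ∉ x := imm_not_mem hI hc hxe'
  have hex' : e' ∉ x := imm_not_mem hI (hI.symm _ _ hc) hxe
  rcases hI.p1 e e' hc with hsb | hnce
  · exact hsb
  exfalso
  have hsubE : x ⊆ x ∪ {e} := Set.subset_union_left
  rcases hnce with ⟨y, hy, hall⟩ | ⟨y, hy, hall⟩ | ⟨y, y', hy, hy', hall⟩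
  · obtain ⟨g, hgx, hgy⟩ := ext_bundle_met hxe hex hy
    rcases hall g hgy with rfl | hbad
    · exact hex' hgx
    · exact Bad2.not_coexist hI hbad hxe' (Set.mem_union_left _ hgx) (by simp)
  · obtain ⟨g, hgx, hgy⟩ := ext_bundle_met hxe' hex' hy
    rcases hall g hgy with rfl | hbad
    · exact hex hgx
    · exact Bad2.not_coexist hI hbad hxe (Set.mem_union_left _ hgx) (by simp)
  · obtain ⟨f₀, hf₀x, hf₀y⟩ := ext_bundle_met hxe hex hy
    obtain ⟨g₀, hg₀x, hg₀y⟩ := ext_bundle_met hxe' hex' hy'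
    rcases hall f₀ hf₀y g₀ hg₀y with rfl | rfl | hbad | hbad | hbad
    · exact hex' hf₀x
    · exact hex hg₀x
    · exact Bad2.not_coexist hI hbad hxe' (Set.mem_union_left _ hf₀x) (by simp)
    · exact Bad2.not_coexist hI hbad hxe (Set.mem_union_left _ hg₀x) (by simp)
    · exact Bad2.not_coexist hI hbad hx hf₀x hg₀x

/-- Key lemma: a configuration that enables `e` also enables any event with the
same bundles which is in conflict with `e`. -/
lemma extend_cellmate (hI : Inv ℰ) {x : Set Ev} {e e'' : Ev}
    (hx : IsConfig ℰ x) (hxe : IsConfig ℰ (x ∪ {e})) (hex : e ∉ x)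
    (hsb : SameB ℰ e e'') (hc : ℰ.conflict e e'') (he''x : e'' ∉ x) :
    IsConfig ℰ (x ∪ {e''}) := by
  have he''E : e'' ∈ ℰ.E := (hI.confE _ _ hc).2
  have hnee'' : e ≠ e'' := fun h => hI.irrefl e (h ▸ hc)
  obtain ⟨α, hα, hset⟩ := hx
  have hmem : ∀ {f : Ev}, f ∈ α → f ∈ x := fun {f} hf => by rw [← hset]; exact hf
  have hmem' : ∀ {f : Ev}, f ∈ x → f ∈ α := fun {f} hf => by rw [← hset] at hf; exact hf
  have hxcfg : IsConfig ℰ x := ⟨α, hα, hset⟩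
  have hmete : ∀ y, ℰ.bundle y e → ∃ g ∈ x, g ∈ y := fun y hy => ext_bundle_met hxe hex hy
  have hmete'' : ∀ y, ℰ.bundle y e'' → ∃ g ∈ x, g ∈ y := fun y hy => hmete y ((hsb y).2 hy)
  have hnb : ¬ ℰ.bundle ∅ e := ext_not_bundle_empty hxe hex
  -- main claim: no conflict between e'' and members of x, by strong induction on trace position
  have main : ∀ n, ∀ f l r, α = l ++ f :: r → l.length = n → ¬ ℰ.conflict e'' f := by
    intro n
    induction n using Nat.strong_induction_on with
    | _ n IH =>
      intro f l r hd hlen hcf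
      have hfx : f ∈ x := hmem (by rw [hd]; simp)
      have hnef : e ≠ f := fun h => hex (h ▸ hfx)
      -- auxiliary: Bad2 g e'' for g strictly before position n is impossible
      have B : ∀ g h', Bad2 ℰ g h' → h' = e'' → ∀ lg rg, α = lg ++ g :: rg →
          lg.length < n → False := by
        intro g h' hb
        induction hb with
        | @conf g' h'' hcgh =>
          rintro rfl lg rg hdg hlt
          exact IH lg.length hlt g' lg rg hdg rfl (hI.symm _ _ hcgh)
        | @left g' h'' xb hxb hallb ihb =>
          rintro rfl lg rg hdg hlt
          obtain ⟨f', hf'lg, hf'xb⟩ := trace_bundle_mem hα hdg hxb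
          obtain ⟨l₁, l₂, rfl⟩ := List.append_of_mem hf'lg
          have hd2 : α = l₁ ++ f' :: (l₂ ++ g' :: rg) := by rw [hdg]; simp
          have hlt2 : l₁.length < n := by
            have h5 : (l₁ ++ f' :: l₂).length = l₁.length + (l₂.length + 1) := by
              rw [List.length_append, List.length_cons]
            omega
          exact ihb f' hf'xb rfl l₁ (l₂ ++ g' :: rg) hd2 hlt2
        | @right g' h'' yb hyb hallb ihb =>
          rintro rfl lg rg hdg hlt
          obtain ⟨h₀, hh₀x, hh₀yb⟩ := hmete'' yb hyb
          have hg'x : g' ∈ x := hmem (by rw [hdg]; simp)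
          exact Bad2.not_coexist hI (hallb h₀ hh₀yb) hxcfg hg'x hh₀x
      rcases hI.p1 e'' f hcf with hsbf | hnce
      · have : ℰ.conflict e f :=
          hI.p2 e e'' f hc hcf hsb hsbf hnef hnb
        exact config_no_conflict hI hxe (by simp) (Set.mem_union_left _ hfx) this
      rcases hnce with ⟨y, hy, hall⟩ | ⟨y, hy, hall⟩ | ⟨y, y', hy, hy', hall⟩
      · obtain ⟨f₀, hf₀x, hf₀y⟩ := hmete'' y hy
        rcases hall f₀ hf₀y with rfl | hbad
        · exact hI.p3 y e'' hy f₀ hf₀y hcf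
        · exact Bad2.not_coexist hI hbad hxcfg hf₀x hfx
      · obtain ⟨g₀, hg₀l, hg₀y⟩ := trace_bundle_mem hα hd hy
        rcases hall g₀ hg₀y with rfl | hbad
        · exact he''x (hmem (by rw [hd]; simp [hg₀l]))
        · obtain ⟨l₁, l₂, rfl⟩ := List.append_of_mem hg₀l
          have hd2 : α = l₁ ++ g₀ :: (l₂ ++ f :: r) := by rw [hd]; simp
          have hlt2 : l₁.length < n := by
            have h5 : (l₁ ++ g₀ :: l₂).length = l₁.length + (l₂.length + 1) := by
              rw [List.length_append, List.length_cons]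
            omega
          exact B g₀ e'' hbad rfl l₁ (l₂ ++ f :: r) hd2 hlt2
      · obtain ⟨f₀, hf₀x, hf₀y⟩ := hmete'' y hy
        obtain ⟨g₀, hg₀l, hg₀y'⟩ := trace_bundle_mem hα hd hy'
        rcases hall f₀ hf₀y g₀ hg₀y' with rfl | rfl | hbad | hbad | hbad
        · exact hI.p3 y e'' hy f₀ hf₀y hcf
        · exact he''x (hmem (by rw [hd]; simp [hg₀l]))
        · exact Bad2.not_coexist hI hbad hxcfg hf₀x hfx
        · obtain ⟨l₁, l₂, rfl⟩ := List.append_of_mem hg₀l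
          have hd2 : α = l₁ ++ g₀ :: (l₂ ++ f :: r) := by rw [hd]; simp
          have hlt2 : l₁.length < n := by
            have h5 : (l₁ ++ g₀ :: l₂).length = l₁.length + (l₂.length + 1) := by
              rw [List.length_append, List.length_cons]
            omega
          exact B g₀ e'' hbad rfl l₁ (l₂ ++ f :: r) hd2 hlt2
        · exact Bad2.not_coexist hI hbad hxcfg hf₀x (hmem (by rw [hd]; simp [hg₀l]))
  have hnc : ∀ f ∈ α, ¬ ℰ.conflict e'' f := by
    intro f hf
    obtain ⟨l, r, rfl⟩ := List.append_of_mem hf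
    exact main l.length f l r rfl rfl
  have hfresh : e'' ∉ α := fun h => he''x (hmem h)
  have henα : ∀ y, ℰ.bundle y e'' → ∃ f ∈ α, f ∈ y := by
    intro y hy
    obtain ⟨g, hgx, hgy⟩ := hmete'' y hy
    exact ⟨g, hmem' hgx, hgy⟩
  refine ⟨α ++ [e''], trace_append hα he''E henα hfresh hnc, ?_⟩
  ext b
  simp only [Set.mem_setOf_eq, List.mem_append, List.mem_singleton, Set.mem_union,
    Set.mem_singleton_iff]
  constructor
  · rintro (hb | rfl)
    · exact Or.inl (hmem hb)
    · exact Or.inr rfl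
  · rintro (hb | rfl)
    · exact Or.inl (hmem' hb)
    · exact Or.inr rfl

end Master
section Clusters
variable {ℰ : BES Ev A}

lemma ImmConflict.symm' (hI : Inv ℰ) {e e' : Ev} (h : ImmConflict ℰ e e') :
    ImmConflict ℰ e' e := by
  obtain ⟨hc, x, hx, h1, h2⟩ := h
  exact ⟨hI.symm _ _ hc, x, hx, h2, h1⟩

lemma exists_cluster (hI : Inv ℰ) {e : Ev} (he : e ∈ ℰ.E) :
    ∃ K, Cluster ℰ K ∧ e ∈ K := by
  have hsingle : PartialCluster ℰ {e} ∧ e ∈ ({e} : Set Ev) := by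
    refine ⟨⟨by simpa using he, ?_, ?_⟩, rfl⟩
    · intro a ha b hb hab
      simp only [Set.mem_singleton_iff] at ha hb
      exact absurd (ha.trans hb.symm) hab
    · intro a ha b hb y hy
      simp only [Set.mem_singleton_iff] at ha hb
      rwa [ha, ← hb] at hy
  have hzorn : ∀ c ⊆ {K | PartialCluster ℰ K ∧ e ∈ K}, IsChain (· ⊆ ·) c → c.Nonempty →
      ∃ ub ∈ {K | PartialCluster ℰ K ∧ e ∈ K}, ∀ s ∈ c, s ⊆ ub := by
    intro c hcS hchain hcne
    refine ⟨⋃₀ c, ⟨⟨?_, ?_, ?_⟩, ?_⟩, fun s hs => Set.subset_sUnion_of_mem hs⟩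
    · intro a ⟨t, htc, hat⟩
      exact (hcS htc).1.1 hat
    · rintro a ⟨t, htc, hat⟩ b ⟨u, huc, hbu⟩ hab
      rcases hchain.total htc huc with hsub | hsub
      · exact (hcS huc).1.2.1 a (hsub hat) b hbu hab
      · exact (hcS htc).1.2.1 a hat b (hsub hbu) hab
    · rintro a ⟨t, htc, hat⟩ b ⟨u, huc, hbu⟩ y hy
      rcases hchain.total htc huc with hsub | hsub
      · exact (hcS huc).1.2.2 a (hsub hat) b hbu y hy
      · exact (hcS htc).1.2.2 a hat b (hsub hbu) y hy
    · obtain ⟨t, htc⟩ := hcne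
      exact ⟨t, htc, (hcS htc).2⟩
  obtain ⟨m, hsub, hmax⟩ := zorn_subset_nonempty
    {K | PartialCluster ℰ K ∧ e ∈ K} hzorn {e} hsingle
  refine ⟨m, ⟨hmax.prop.1, ?_⟩, hmax.prop.2⟩
  intro H hH hmH
  have heH : e ∈ H := hmH hmax.prop.2
  exact Set.Subset.antisymm (hmax.2 ⟨hH, heH⟩ hmH) hmH

/-- The master theorem: the invariant implies confusion freeness. -/
theorem confusionFree_of_inv (hI : Inv ℰ) : ConfusionFree ℰ := by
  constructor
  · -- condition (i)
    intro e e' h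
    refine Set.mem_sInter.2 ?_
    intro K hK
    simp only [Set.mem_setOf_eq] at hK
    obtain ⟨hKc, he'K⟩ := hK
    by_contra heK
    obtain ⟨hc, x, hx, hxe, hxe'⟩ := h
    have hne : e ≠ e' := fun hh => hI.irrefl e (hh ▸ hc)
    have hsb : SameB ℰ e e' := imm_sameB hI ⟨hc, x, hx, hxe, hxe'⟩
    have hex : e ∉ x := imm_not_mem hI hc hxe'
    have hex' : e' ∉ x := imm_not_mem hI (hI.symm _ _ hc) hxe
    have hnb : ¬ ℰ.bundle ∅ e := ext_not_bundle_empty hxe hex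
    -- facts about members of K
    have hfacts : ∀ e'' ∈ K, e'' ≠ e' →
        SameB ℰ e' e'' ∧ ℰ.conflict e e'' := by
      intro e'' he''K hne''
      have himm : ImmConflict ℰ e' e'' := hKc.1.2.1 e' he'K e'' he''K (fun hh => hne'' hh.symm)
      have hsb' : SameB ℰ e' e'' := imm_sameB hI himm
      have hnee'' : e ≠ e'' := fun hh => heK (hh ▸ he''K)
      exact ⟨hsb', hI.p2 e e' e'' hc himm.1 hsb hsb' hnee'' hnb⟩
    have hsbAll : ∀ e'' ∈ K, SameB ℰ e e'' := by
      intro e'' he''K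
      by_cases hee' : e'' = e'
      · rw [hee']; exact hsb
      · exact hsb.trans' (hfacts e'' he''K hee').1
    have hcAll : ∀ e'' ∈ K, ℰ.conflict e e'' := by
      intro e'' he''K
      by_cases hee' : e'' = e'
      · rw [hee']; exact hc
      · exact (hfacts e'' he''K hee').2
    have himmAll : ∀ e'' ∈ K, ImmConflict ℰ e e'' := by
      intro e'' he''K
      have hce'' := hcAll e'' he''K
      have he''x : e'' ∉ x := fun hmem =>
        config_no_conflict hI hxe (by simp) (Set.mem_union_left _ hmem) hce''
      exact ⟨hce'', x, hx, hxe,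
        extend_cellmate hI hx hxe hex (hsbAll e'' he''K) hce'' he''x⟩
    -- insert e K is a partial cluster
    have hpc : PartialCluster ℰ (insert e K) := by
      refine ⟨?_, ?_, ?_⟩
      · rintro a (rfl | haK)
        · exact (hI.confE _ _ hc).1
        · exact hKc.1.1 haK
      · rintro a (rfl | haK) b (rfl | hbK) hab
        · exact absurd rfl hab
        · exact himmAll b hbK
        · exact (himmAll a haK).symm' hI
        · exact hKc.1.2.1 a haK b hbK hab
      · rintro a (rfl | haK) b (rfl | hbK) y hy
        · exact hy
        · exact ((hsbAll b hbK) y).1 hy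
        · exact ((hsbAll a haK) y).2 hy
        · exact hKc.1.2.2 a haK b hbK y hy
    have := hKc.2 (insert e K) hpc (Set.subset_insert e K)
    exact heK (this ▸ Set.mem_insert e K)
  · -- condition (ii)
    intro x e hx hcell hxe e'' he''cell
    have heE : e ∈ ℰ.E := ext_mem_E hxe
    have hecell : e ∈ cell ℰ e := by
      refine Set.mem_sInter.2 ?_
      intro K hK
      simp only [Set.mem_setOf_eq] at hK
      exact hK.2
    have hex : e ∉ x := fun hmem => by
      have : e ∈ cell ℰ e ∩ x := ⟨hecell, hmem⟩
      rw [hcell] at this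
      exact this
    by_cases hee : e'' = e
    · rwa [hee]
    · obtain ⟨K, hK, heK⟩ := exists_cluster hI heE
      have he''K : e'' ∈ K := Set.mem_sInter.1 he''cell K (by exact ⟨hK, heK⟩)
      have himm : ImmConflict ℰ e e'' := hK.1.2.1 e heK e'' he''K (fun hh => hee hh.symm)
      have he''x : e'' ∉ x := fun hmem => by
        have : e'' ∈ cell ℰ e ∩ x := ⟨he''cell, hmem⟩
        rw [hcell] at this
        exact this
      exact extend_cellmate hI hx hxe hex (imm_sameB hI himm) himm.1 he''x

end Clusters
section Basics

lemma acc_of_no_bundle {ℰ : BES Ev A} (h : ∀ x e, ¬ ℰ.bundle x e) (e : Ev) :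
    Acc (prec ℰ) e :=
  Acc.intro e (fun _ ⟨x, hx, _⟩ => absurd hx (h x _))

lemma inv_zero : Inv (besZero : BES Ev A) := by
  refine ⟨?_, ?_, ?_, ?_, ?_, ?_, ?_, ?_, ?_, ?_⟩ <;>
    first
      | exact fun e h => h.elim
      | exact fun e e' h => h.elim
      | exact fun x e h => h.elim
      | exact acc_of_no_bundle (fun _ _ h => h)
      | (intro e he; exact absurd he.1 (Set.notMem_empty e))
      | exact Set.Subset.refl _
      | exact fun e1 e2 e3 h _ _ _ _ _ => h.elim
      | exact fun e e' h => h.elim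

lemma inv_one (e : Ev) : Inv (besOne e : BES Ev A) := by
  refine ⟨?_, ?_, ?_, ?_, ?_, ?_, ?_, ?_, ?_, ?_⟩
  · exact fun _ h => h
  · exact fun _ _ h => h.elim
  · exact fun _ _ h => h.elim
  · exact fun _ _ h => h.elim
  · exact Set.Subset.refl _
  · exact fun _ _ h => h.elim
  · exact acc_of_no_bundle (fun _ _ h => h) 
  · intro a ha b hb hab
    simp only [bInit, besOne, Set.mem_setOf_eq, Set.mem_singleton_iff] at ha hb
    exact absurd (ha.1.trans hb.1.symm) hab
  · exact fun _ _ _ h => h.elim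
  · exact fun _ _ h => h.elim

lemma inv_act (e : Ev) (a : A) : Inv (besAct e a : BES Ev A) := by
  refine ⟨?_, ?_, ?_, ?_, ?_, ?_, ?_, ?_, ?_, ?_⟩
  · exact fun _ h => h
  · exact fun _ _ h => h.elim
  · exact fun _ _ h => h.elim
  · exact fun _ _ h => h.elim
  · exact Set.Subset.refl _
  · exact fun _ _ h => h.elim
  · exact acc_of_no_bundle (fun _ _ h => h)
  · intro a' ha b hb hab
    simp only [bInit, besAct, Set.mem_setOf_eq, Set.mem_singleton_iff] at ha hb
    exact absurd (ha.1.trans hb.1.symm) hab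
  · exact fun _ _ _ h => h.elim
  · exact fun _ _ h => h.elim

end Basics
section Rename
variable {ℰ : BES Ev A} {g : Ev → Ev}

lemma ren_bundle_iff (hg : Set.InjOn g ℰ.E) (hI : Inv ℰ) {a : Ev} (ha : a ∈ ℰ.E)
    (x : Set Ev) : (brename g ℰ).bundle x (g a) ↔ ∃ y, ℰ.bundle y a ∧ x = g '' y := by
  constructor
  · rintro ⟨y, a', hy, rfl, hga⟩
    have ha' : a' ∈ ℰ.E := (hI.bunE _ _ hy).1
    have : a' = a := hg ha' ha hga.symm
    exact ⟨y, this ▸ hy, rfl⟩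
  · rintro ⟨y, hy, rfl⟩
    exact ⟨y, a, hy, rfl, rfl⟩

lemma ren_conflict_iff (hg : Set.InjOn g ℰ.E) (hI : Inv ℰ) {a b : Ev}
    (ha : a ∈ ℰ.E) (hb : b ∈ ℰ.E) :
    (brename g ℰ).conflict (g a) (g b) ↔ ℰ.conflict a b := by
  constructor
  · rintro ⟨a', b', hc, hga, hgb⟩
    obtain ⟨ha', hb'⟩ := hI.confE _ _ hc
    rwa [hg ha' ha hga.symm, hg hb' hb hgb.symm] at hc
  · intro hc
    exact ⟨a, b, hc, rfl, rfl⟩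

lemma ren_sameB (hg : Set.InjOn g ℰ.E) (hI : Inv ℰ) {a b : Ev}
    (ha : a ∈ ℰ.E) (hb : b ∈ ℰ.E) (h : SameB ℰ a b) :
    SameB (brename g ℰ) (g a) (g b) := by
  intro x
  rw [ren_bundle_iff hg hI ha, ren_bundle_iff hg hI hb]
  constructor
  · rintro ⟨y, hy, rfl⟩; exact ⟨y, (h y).1 hy, rfl⟩
  · rintro ⟨y, hy, rfl⟩; exact ⟨y, (h y).2 hy, rfl⟩

lemma ren_sameB_rev (hg : Set.InjOn g ℰ.E) (hI : Inv ℰ) {a b : Ev}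
    (ha : a ∈ ℰ.E) (hb : b ∈ ℰ.E) (h : SameB (brename g ℰ) (g a) (g b)) :
    SameB ℰ a b := by
  intro y
  constructor
  · intro hy
    have h1 : (brename g ℰ).bundle (g '' y) (g a) := ⟨y, a, hy, rfl, rfl⟩
    obtain ⟨y', hy', heq⟩ := (ren_bundle_iff hg hI hb _).1 ((h _).1 h1)
    have : y' = y := ((hg.image_eq_image_iff (hI.bunE _ _ hy').2 (hI.bunE _ _ hy).2).1 heq.symm)
    exact this ▸ hy'
  · intro hy
    have h1 : (brename g ℰ).bundle (g '' y) (g b) := ⟨y, b, hy, rfl, rfl⟩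
    obtain ⟨y', hy', heq⟩ := (ren_bundle_iff hg hI ha _).1 ((h _).2 h1)
    have : y' = y := ((hg.image_eq_image_iff (hI.bunE _ _ hy').2 (hI.bunE _ _ hy).2).1 heq.symm)
    exact this ▸ hy'

lemma ren_bad2 (hI : Inv ℰ) {f f' : Ev} (h : Bad2 ℰ f f') :
    Bad2 (brename g ℰ) (g f) (g f') := by
  induction h with
  | conf hc => exact Bad2.conf ⟨_, _, hc, rfl, rfl⟩
  | left x hx _ ih =>
    refine Bad2.left (g '' x) ⟨x, _, hx, rfl, rfl⟩ ?_
    rintro f₁ ⟨c, hc, rfl⟩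
    exact ih c hc
  | right y hy _ ih =>
    refine Bad2.right (g '' y) ⟨y, _, hy, rfl, rfl⟩ ?_
    rintro g₁ ⟨c, hc, rfl⟩
    exact ih c hc

lemma ren_nce (hI : Inv ℰ) {a b : Ev} (h : NCE ℰ a b) :
    NCE (brename g ℰ) (g a) (g b) := by
  rcases h with ⟨x, hx, hall⟩ | ⟨y, hy, hall⟩ | ⟨x, y, hx, hy, hall⟩
  · refine Or.inl ⟨g '' x, ⟨x, a, hx, rfl, rfl⟩, ?_⟩
    rintro f ⟨c, hc, rfl⟩
    rcases hall c hc with rfl | hbad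
    · exact Or.inl rfl
    · exact Or.inr (ren_bad2 hI hbad)
  · refine Or.inr (Or.inl ⟨g '' y, ⟨y, b, hy, rfl, rfl⟩, ?_⟩)
    rintro f ⟨c, hc, rfl⟩
    rcases hall c hc with rfl | hbad
    · exact Or.inl rfl
    · exact Or.inr (ren_bad2 hI hbad)
  · refine Or.inr (Or.inr ⟨g '' x, g '' y, ⟨x, a, hx, rfl, rfl⟩, ⟨y, b, hy, rfl, rfl⟩, ?_⟩)
    rintro f ⟨c, hc, rfl⟩ f' ⟨c', hc', rfl⟩
    rcases hall c hc c' hc' with rfl | rfl | hbad | hbad | hbad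
    · exact Or.inl rfl
    · exact Or.inr (Or.inl rfl)
    · exact Or.inr (Or.inr (Or.inl (ren_bad2 hI hbad)))
    · exact Or.inr (Or.inr (Or.inr (Or.inl (ren_bad2 hI hbad))))
    · exact Or.inr (Or.inr (Or.inr (Or.inr (ren_bad2 hI hbad))))

lemma inv_rename (hg : Set.InjOn g ℰ.E) (hI : Inv ℰ) : Inv (brename g ℰ) := by
  have hbinit : ∀ a ∈ ℰ.E, (g a ∈ bInit (brename g ℰ) ↔ a ∈ bInit ℰ) := by
    intro a ha
    constructor
    · rintro ⟨_, hnb⟩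
      exact ⟨ha, fun y hy => hnb (g '' y) ⟨y, a, hy, rfl, rfl⟩⟩
    · rintro ⟨_, hnb⟩
      refine ⟨⟨a, ha, rfl⟩, fun x hx => ?_⟩
      obtain ⟨y, hy, _⟩ := (ren_bundle_iff hg hI ha x).1 hx
      exact hnb y hy
  refine ⟨?_, ?_, ?_, ?_, ?_, ?_, ?_, ?_, ?_, ?_⟩
  · rintro e ⟨a, b, hc, rfl, hgb⟩
    obtain ⟨ha, hb⟩ := hI.confE _ _ hc
    rw [hg hb ha hgb.symm] at hc
    exact hI.irrefl a hc
  · rintro e e' ⟨a, b, hc, rfl, rfl⟩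
    exact ⟨b, a, hI.symm _ _ hc, rfl, rfl⟩
  · rintro e e' ⟨a, b, hc, rfl, rfl⟩
    obtain ⟨ha, hb⟩ := hI.confE _ _ hc
    exact ⟨⟨a, ha, rfl⟩, ⟨b, hb, rfl⟩⟩
  · rintro x e ⟨y, a, hy, rfl, rfl⟩
    obtain ⟨ha, hyE⟩ := hI.bunE _ _ hy
    exact ⟨⟨a, ha, rfl⟩, fun f ⟨c, hc, hgc⟩ => ⟨c, hyE hc, hgc⟩⟩
  · rintro e ⟨a, ha, rfl⟩
    exact ⟨a, hI.finE ha, rfl⟩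
  · rintro x e ⟨y, a, hy, rfl, rfl⟩ f ⟨c, hc, rfl⟩ hcf
    obtain ⟨ha, hyE⟩ := hI.bunE _ _ hy
    obtain ⟨a', c', hc', hga, hgc⟩ := hcf
    obtain ⟨ha', hc'E⟩ := hI.confE _ _ hc'
    rw [hg ha' ha hga.symm, hg hc'E (hyE hc) hgc.symm] at hc'
    exact hI.p3 y a hy c hc hc'
  · -- well-foundedness
    have hstep : ∀ a, Acc (prec ℰ) a → a ∈ ℰ.E → Acc (prec (brename g ℰ)) (g a) := by
      intro a hacc
      induction hacc with
      | intro a' _ ih =>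
        intro ha'
        refine Acc.intro _ ?_
        rintro f ⟨x, ⟨y, a'', hy, rfl, hga⟩, ⟨c, hcy, rfl⟩⟩
        have ha'' : a'' ∈ ℰ.E := (hI.bunE _ _ hy).1
        have heq : a'' = a' := hg ha'' ha' hga.symm
        subst heq
        exact ih c ⟨y, hy, hcy⟩ ((hI.bunE _ _ hy).2 hcy)
    intro e
    by_cases he : ∃ a ∈ ℰ.E, g a = e
    · obtain ⟨a, ha, rfl⟩ := he
      exact hstep a (hI.wf a) ha
    · refine Acc.intro _ ?_
      rintro f ⟨x, ⟨y, a, hy, rfl, hga⟩, _⟩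
      exact absurd ⟨a, (hI.bunE _ _ hy).1, hga.symm⟩ he
  · rintro e ⟨⟨a, ha, rfl⟩, hnb⟩ f ⟨⟨b, hb, rfl⟩, hnb'⟩ hne
    have hainit : a ∈ bInit ℰ := (hbinit a ha).1 ⟨⟨a, ha, rfl⟩, hnb⟩
    have hbinit' : b ∈ bInit ℰ := (hbinit b hb).1 ⟨⟨b, hb, rfl⟩, hnb'⟩
    have hab : a ≠ b := fun h => hne (by rw [h])
    exact ⟨a, b, hI.pinit a hainit b hbinit' hab, rfl, rfl⟩
  · rintro e1 e2 e3 h12 h23 hs12 hs23 hne13 hnb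
    obtain ⟨a1, a2, hc12, rfl, rfl⟩ := h12
    obtain ⟨ha1, ha2⟩ := hI.confE _ _ hc12
    obtain ⟨b2, a3, hc23, hgb2, rfl⟩ := h23
    obtain ⟨hb2, ha3⟩ := hI.confE _ _ hc23
    rw [hg hb2 ha2 hgb2.symm] at hc23
    have hs12' := ren_sameB_rev hg hI ha1 ha2 hs12
    have hs23' := ren_sameB_rev hg hI ha2 ha3 hs23
    have hne13' : a1 ≠ a3 := fun h => hne13 (by rw [h])
    have hnb' : ¬ ℰ.bundle ∅ a1 := fun h => hnb ⟨∅, a1, h, by simp, rfl⟩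
    exact ⟨a1, a3, hI.p2 a1 a2 a3 hc12 hc23 hs12' hs23' hne13' hnb', rfl, rfl⟩
  · rintro e e' ⟨a, b, hc, rfl, rfl⟩
    obtain ⟨ha, hb⟩ := hI.confE _ _ hc
    rcases hI.p1 a b hc with hs | hn
    · exact Or.inl (ren_sameB hg hI ha hb hs)
    · exact Or.inr (ren_nce hI hn)

end Rename
section Transport

lemma bad2_mono {ℰ 𝒢 : BES Ev A} (hc : ∀ e e', ℰ.conflict e e' → 𝒢.conflict e e')
    (hb : ∀ x e, ℰ.bundle x e → 𝒢.bundle x e) {f f' : Ev} (h : Bad2 ℰ f f') :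
    Bad2 𝒢 f f' := by
  induction h with
  | conf h => exact Bad2.conf (hc _ _ h)
  | left x hx _ ih => exact Bad2.left x (hb _ _ hx) ih
  | right y hy _ ih => exact Bad2.right y (hb _ _ hy) ih

lemma nce_mono {ℰ 𝒢 : BES Ev A} (hc : ∀ e e', ℰ.conflict e e' → 𝒢.conflict e e')
    (hb : ∀ x e, ℰ.bundle x e → 𝒢.bundle x e) {e e' : Ev} (h : NCE ℰ e e') :
    NCE 𝒢 e e' := by
  rcases h with ⟨x, hx, hall⟩ | ⟨y, hy, hall⟩ | ⟨x, y, hx, hy, hall⟩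
  · exact Or.inl ⟨x, hb _ _ hx, fun f hf => (hall f hf).imp id (bad2_mono hc hb)⟩
  · exact Or.inr (Or.inl ⟨y, hb _ _ hy, fun f hf => (hall f hf).imp id (bad2_mono hc hb)⟩)
  · refine Or.inr (Or.inr ⟨x, y, hb _ _ hx, hb _ _ hy, fun f hf g hg => ?_⟩)
    rcases hall f hf g hg with h | h | h | h | h
    · exact Or.inl h
    · exact Or.inr (Or.inl h)
    · exact Or.inr (Or.inr (Or.inl (bad2_mono hc hb h)))
    · exact Or.inr (Or.inr (Or.inr (Or.inl (bad2_mono hc hb h))))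
    · exact Or.inr (Or.inr (Or.inr (Or.inr (bad2_mono hc hb h))))

lemma bad2_symm {ℰ : BES Ev A} (hs : ∀ e e', ℰ.conflict e e' → ℰ.conflict e' e)
    {f f' : Ev} (h : Bad2 ℰ f f') : Bad2 ℰ f' f := by
  induction h with
  | conf h => exact Bad2.conf (hs _ _ h)
  | left x hx _ ih => exact Bad2.right x hx ih
  | right y hy _ ih => exact Bad2.left y hy ih

/-- `Inv` only depends on events, conflict, bundles and final events. -/
lemma inv_congr {ℰ 𝒢 : BES Ev A} (hE : ℰ.E = 𝒢.E)
    (hc : ∀ e e', ℰ.conflict e e' ↔ 𝒢.conflict e e')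
    (hb : ∀ x e, ℰ.bundle x e ↔ 𝒢.bundle x e)
    (hf : ℰ.final = 𝒢.final) (hI : Inv ℰ) : Inv 𝒢 := by
  have hsB : ∀ e e', SameB ℰ e e' ↔ SameB 𝒢 e e' := by
    intro e e'
    constructor <;> intro h x
    · rw [← hb, ← hb]; exact h x
    · rw [hb, hb]; exact h x
  have hbinit : ∀ e, e ∈ bInit ℰ ↔ e ∈ bInit 𝒢 := by
    intro e
    unfold bInit
    simp only [Set.mem_setOf_eq, hE]
    constructor <;> rintro ⟨h1, h2⟩
    · exact ⟨h1, fun x hx => h2 x ((hb x e).2 hx)⟩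
    · exact ⟨h1, fun x hx => h2 x ((hb x e).1 hx)⟩
  refine ⟨?_, ?_, ?_, ?_, ?_, ?_, ?_, ?_, ?_, ?_⟩
  · exact fun e h => hI.irrefl e ((hc e e).2 h)
  · exact fun e e' h => (hc e' e).1 (hI.symm e e' ((hc e e').2 h))
  · intro e e' h
    have := hI.confE e e' ((hc e e').2 h)
    exact ⟨hE ▸ this.1, hE ▸ this.2⟩
  · intro x e h
    have := hI.bunE x e ((hb x e).2 h)
    exact ⟨hE ▸ this.1, hE ▸ this.2⟩
  · rw [← hE, ← hf]; exact hI.finE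
  · exact fun x e h f hf' hcf => hI.p3 x e ((hb x e).2 h) f hf' ((hc e f).2 hcf)
  · intro e
    have : ∀ e, Acc (prec ℰ) e → Acc (prec 𝒢) e := by
      intro e he
      induction he with
      | intro e' _ ih =>
        refine Acc.intro _ ?_
        rintro f ⟨x, hx, hfx⟩
        exact ih f ⟨x, (hb x e').2 hx, hfx⟩
    exact this e (hI.wf e)
  · intro e he f hf' hne
    exact (hc e f).1 (hI.pinit e ((hbinit e).2 he) f ((hbinit f).2 hf') hne)
  · intro e1 e2 e3 h12 h23 hs12 hs23 hne hnb
    exact (hc e1 e3).1 (hI.p2 e1 e2 e3 ((hc _ _).2 h12) ((hc _ _).2 h23)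
      ((hsB _ _).2 hs12) ((hsB _ _).2 hs23) hne (fun h => hnb ((hb _ _).1 h)))
  · intro e e' h
    rcases hI.p1 e e' ((hc e e').2 h) with hs | hn
    · exact Or.inl ((hsB _ _).1 hs)
    · exact Or.inr (nce_mono (fun a b => (hc a b).1) (fun x a => (hb x a).1) hn)

end Transport
section Choice
variable {ℰ ℱ : BES Ev A}

lemma acc_transfer {ℰ 𝒢 : BES Ev A} {S : Set Ev}
    (h : ∀ x e, e ∈ S → 𝒢.bundle x e → ℰ.bundle x e ∧ x ⊆ S) :
    ∀ e, Acc (prec ℰ) e → e ∈ S → Acc (prec 𝒢) e := by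
  intro e he
  induction he with
  | intro e' _ ih =>
    intro heS
    refine Acc.intro _ ?_
    rintro f ⟨x, hx, hfx⟩
    obtain ⟨hbe, hxS⟩ := h x e' heS hx
    exact ih f ⟨x, hbe, hfx⟩ (hxS hfx)

variable (hdisj : ℰ.E ∩ ℱ.E = ∅)

lemma notboth (hdisj : ℰ.E ∩ ℱ.E = ∅) {a : Ev} (h : a ∈ ℰ.E) (h' : a ∈ ℱ.E) : False := by
  have : a ∈ ℰ.E ∩ ℱ.E := ⟨h, h'⟩
  rw [hdisj] at this
  exact this

section withInv
variable (hIE : Inv ℰ) (hIF : Inv ℱ)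
include hdisj hIE hIF

lemma choice_bundleL {e : Ev} (he : e ∈ ℰ.E) (x : Set Ev) :
    (bchoice ℰ ℱ).bundle x e ↔ ℰ.bundle x e := by
  constructor
  · rintro (h | h)
    · exact h
    · exact absurd he (fun he' => notboth hdisj he' (hIF.bunE _ _ h).1)
  · exact Or.inl

lemma choice_bundleR {e : Ev} (he : e ∈ ℱ.E) (x : Set Ev) :
    (bchoice ℰ ℱ).bundle x e ↔ ℱ.bundle x e := by
  constructor
  · rintro (h | h)
    · exact absurd he (fun he' => notboth hdisj (hIE.bunE _ _ h).1 he')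
    · exact h
  · exact Or.inr

lemma choice_sameBL {e e' : Ev} (he : e ∈ ℰ.E) (he' : e' ∈ ℰ.E) :
    SameB (bchoice ℰ ℱ) e e' ↔ SameB ℰ e e' := by
  constructor <;> intro h x
  · rw [← choice_bundleL hdisj hIE hIF he, ← choice_bundleL hdisj hIE hIF he']; exact h x
  · rw [choice_bundleL hdisj hIE hIF he, choice_bundleL hdisj hIE hIF he']; exact h x

lemma choice_sameBR {e e' : Ev} (he : e ∈ ℱ.E) (he' : e' ∈ ℱ.E) :
    SameB (bchoice ℰ ℱ) e e' ↔ SameB ℱ e e' := by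
  constructor <;> intro h x
  · rw [← choice_bundleR hdisj hIE hIF he, ← choice_bundleR hdisj hIE hIF he']; exact h x
  · rw [choice_bundleR hdisj hIE hIF he, choice_bundleR hdisj hIE hIF he']; exact h x

lemma choice_nobundleL {e : Ev} (he : e ∈ bInit ℰ) (x : Set Ev) :
    ¬ (bchoice ℰ ℱ).bundle x e := by
  rw [choice_bundleL hdisj hIE hIF he.1]
  exact he.2 x

lemma choice_nobundleR {e : Ev} (he : e ∈ bInit ℱ) (x : Set Ev) :
    ¬ (bchoice ℰ ℱ).bundle x e := by
  rw [choice_bundleR hdisj hIE hIF he.1]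
  exact he.2 x

omit hdisj hIE hIF in
lemma sameB_nobundle {𝒢 : BES Ev A} {a b : Ev} (h : SameB 𝒢 a b)
    (ha : ∀ x, ¬ 𝒢.bundle x a) (x : Set Ev) : ¬ 𝒢.bundle x b :=
  fun hx => ha x ((h x).2 hx)

lemma choice_binitL {e : Ev} (he : e ∈ ℰ.E)
    (h : ∀ x, ¬ (bchoice ℰ ℱ).bundle x e) : e ∈ bInit ℰ :=
  ⟨he, fun x hx => h x (Or.inl hx)⟩

lemma choice_binitR {e : Ev} (he : e ∈ ℱ.E)
    (h : ∀ x, ¬ (bchoice ℰ ℱ).bundle x e) : e ∈ bInit ℱ :=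
  ⟨he, fun x hx => h x (Or.inr hx)⟩

/-- Cross-component events with the same bundles and no empty bundle are initial. -/
lemma choice_cross_nob {e e' : Ev} (he : e ∈ ℰ.E) (he' : e' ∈ ℱ.E)
    (hsb : SameB (bchoice ℰ ℱ) e e') (hnb : ¬ (bchoice ℰ ℱ).bundle ∅ e) :
    e ∈ bInit ℰ ∧ e' ∈ bInit ℱ := by
  have hno : ∀ x, ¬ (bchoice ℰ ℱ).bundle x e := by
    intro x hx
    have hxE : x ⊆ ℰ.E := (hIE.bunE _ _ ((choice_bundleL hdisj hIE hIF he x).1 hx)).2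
    have hx' : (bchoice ℰ ℱ).bundle x e' := (hsb x).1 hx
    have hxF : x ⊆ ℱ.E := (hIF.bunE _ _ ((choice_bundleR hdisj hIE hIF he' x).1 hx')).2
    have : x = ∅ := by
      ext a
      simp only [Set.mem_empty_iff_false, iff_false]
      exact fun ha => notboth hdisj (hxE ha) (hxF ha)
    rw [this] at hx
    exact hnb hx
  exact ⟨choice_binitL hdisj hIE hIF he hno, choice_binitR hdisj hIE hIF he' (sameB_nobundle hsb hno)⟩

/-- Events from different branches of a choice can never coexist. -/
lemma choice_bad2 : ∀ f, Acc (prec ℰ) f → f ∈ ℰ.E →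
    ∀ g', Acc (prec ℱ) g' → g' ∈ ℱ.E → Bad2 (bchoice ℰ ℱ) f g' := by
  have aux : ∀ g', Acc (prec ℱ) g' → g' ∈ ℱ.E → ∀ f, f ∈ bInit ℰ →
      Bad2 (bchoice ℰ ℱ) f g' := by
    intro g' hg'
    induction hg' with
    | intro g'' _ ih =>
      intro hg''F f hf
      by_cases hgi : g'' ∈ bInit ℱ
      · exact Bad2.conf (Or.inr (Or.inr (Or.inl ⟨hf, hgi⟩)))
      · have : ∃ y, ℱ.bundle y g'' := by
          by_contra hno
          push_neg at hno
          exact hgi ⟨hg''F, hno⟩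
        obtain ⟨y, hy⟩ := this
        refine Bad2.right y (Or.inr hy) ?_
        intro g₁ hg₁
        exact ih g₁ ⟨y, hy, hg₁⟩ ((hIF.bunE _ _ hy).2 hg₁) f hf
  intro f hf
  induction hf with
  | intro f' _ ih =>
    intro hf'E g' hg' hg'F
    by_cases hfi : f' ∈ bInit ℰ
    · exact aux g' hg' hg'F f' hfi
    · have : ∃ y, ℰ.bundle y f' := by
        by_contra hno
        push_neg at hno
        exact hfi ⟨hf'E, hno⟩
      obtain ⟨y, hy⟩ := this
      refine Bad2.left y (Or.inl hy) ?_
      intro f₁ hf₁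
      exact ih f₁ ⟨y, hy, hf₁⟩ ((hIE.bunE _ _ hy).2 hf₁) g' hg' hg'F

/-- p2 for a choice, assuming `e1` lies in the left component. -/
lemma choice_p2_aux :
    ∀ e1 e2 e3, (bchoice ℰ ℱ).conflict e1 e2 → (bchoice ℰ ℱ).conflict e2 e3 →
    SameB (bchoice ℰ ℱ) e1 e2 → SameB (bchoice ℰ ℱ) e2 e3 → e1 ≠ e3 →
    ¬ (bchoice ℰ ℱ).bundle ∅ e1 → e1 ∈ ℰ.E → (bchoice ℰ ℱ).conflict e1 e3 := by
  intro e1 e2 e3 h12 h23 hs12 hs23 hne hnb he1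
  have hnb2 : ¬ (bchoice ℰ ℱ).bundle ∅ e2 := fun h => hnb ((hs12 ∅).2 h)
  -- classify the first conflict
  have hcase : ℰ.conflict e1 e2 ∨ (e2 ∈ ℱ.E ∧ e1 ∈ bInit ℰ ∧ e2 ∈ bInit ℱ) := by
    rcases h12 with h | h | h | h | h | h
    · exact Or.inl h
    · exact absurd he1 (fun h' => notboth hdisj h' (hIF.confE _ _ h).1)
    · exact Or.inr ⟨h.2.1, choice_cross_nob hdisj hIE hIF he1 h.2.1 hs12 hnb⟩
    · exact absurd he1 (fun h' => notboth hdisj h' h.1.1)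
    · exact Or.inr ⟨hIF.finE h.2, choice_cross_nob hdisj hIE hIF he1 (hIF.finE h.2) hs12 hnb⟩
    · exact absurd he1 (fun h' => notboth hdisj h' (hIF.finE h.1))
  rcases hcase with h1c | ⟨he2F, he1i, he2i⟩
  · -- e2 in the left component
    have he2 : e2 ∈ ℰ.E := (hIE.confE _ _ h1c).2
    rcases h23 with h | h | h | h | h | h
    · -- within the left component
      have he3 : e3 ∈ ℰ.E := (hIE.confE _ _ h).2
      exact Or.inl (hIE.p2 e1 e2 e3 h1c h
        ((choice_sameBL hdisj hIE hIF he1 he2).1 hs12)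
        ((choice_sameBL hdisj hIE hIF he2 he3).1 hs23) hne
        (fun hb => hnb (Or.inl hb)))
    · exact absurd he2 (fun h' => notboth hdisj h' (hIF.confE _ _ h).1)
    · -- e2 init ℰ, e3 init ℱ
      have he1i : e1 ∈ bInit ℰ :=
        choice_binitL hdisj hIE hIF he1 (sameB_nobundle (SameB.symm' hs12)
          (choice_nobundleL hdisj hIE hIF h.1))
      exact Or.inr (Or.inr (Or.inl ⟨he1i, h.2⟩))
    · exact absurd he2 (fun h' => notboth hdisj h' h.1.1)
    · -- e2 ∈ Φ_ℰ, e3 ∈ Φ_ℱ: cross same-bundles forces initiality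
      obtain ⟨he2i, he3i⟩ :=
        choice_cross_nob hdisj hIE hIF he2 (hIF.finE h.2) hs23 hnb2
      have he1i : e1 ∈ bInit ℰ :=
        choice_binitL hdisj hIE hIF he1 (sameB_nobundle (SameB.symm' hs12)
          (choice_nobundleL hdisj hIE hIF he2i))
      exact Or.inr (Or.inr (Or.inl ⟨he1i, he3i⟩))
    · exact absurd he2 (fun h' => notboth hdisj h' (hIF.finE h.1))
  · -- e2 in the right component, e1 and e2 initial
    rcases h23 with h | h | h | h | h | h
    · exact absurd he2F (fun h' => notboth hdisj (hIE.confE _ _ h).1 h')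
    · -- within ℱ
      have he3 : e3 ∈ ℱ.E := (hIF.confE _ _ h).2
      have he3i : e3 ∈ bInit ℱ :=
        choice_binitR hdisj hIE hIF he3 (sameB_nobundle hs23 (choice_nobundleR hdisj hIE hIF he2i))
      exact Or.inr (Or.inr (Or.inl ⟨he1i, he3i⟩))
    · exact absurd he2F (fun h' => notboth hdisj h.1.1 h')
    · -- e2 init ℱ, e3 init ℰ
      exact Or.inl (hIE.pinit e1 he1i e3 h.2 hne)
    · exact absurd he2F (fun h' => notboth hdisj (hIE.finE h.1) h')
    · -- e2 ∈ Φ_ℱ, e3 ∈ Φ_ℰ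
      have he3i : e3 ∈ bInit ℰ :=
        choice_binitL hdisj hIE hIF (hIE.finE h.2)
          (sameB_nobundle hs23 (choice_nobundleR hdisj hIE hIF he2i))
      exact Or.inl (hIE.pinit e1 he1i e3 he3i hne)

omit hdisj hIE hIF in
lemma choice_swap_conflict (a b : Ev) :
    (bchoice ℰ ℱ).conflict a b ↔ (bchoice ℱ ℰ).conflict a b := by
  simp only [bchoice]
  tauto

omit hdisj hIE hIF in
lemma choice_swap_bundle (x : Set Ev) (e : Ev) :
    (bchoice ℰ ℱ).bundle x e ↔ (bchoice ℱ ℰ).bundle x e := by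
  simp only [bchoice]
  tauto

lemma inv_choice : Inv (bchoice ℰ ℱ) := by
  have hbinit : bInit (bchoice ℰ ℱ) = bInit ℰ ∪ bInit ℱ := by
    ext e
    constructor
    · rintro ⟨he, hnb⟩
      rcases he with he | he
      · exact Or.inl (choice_binitL hdisj hIE hIF he hnb)
      · exact Or.inr (choice_binitR hdisj hIE hIF he hnb)
    · rintro (he | he)
      · exact ⟨Or.inl he.1, choice_nobundleL hdisj hIE hIF he⟩
      · exact ⟨Or.inr he.1, choice_nobundleR hdisj hIE hIF he⟩
  refine ⟨?_, ?_, ?_, ?_, ?_, ?_, ?_, ?_, ?_, ?_⟩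
  · -- irrefl
    rintro e (h | h | h | h | h | h)
    · exact hIE.irrefl e h
    · exact hIF.irrefl e h
    · exact notboth hdisj h.1.1 h.2.1
    · exact notboth hdisj h.2.1 h.1.1
    · exact notboth hdisj (hIE.finE h.1) (hIF.finE h.2)
    · exact notboth hdisj (hIE.finE h.2) (hIF.finE h.1)
  · -- symm
    rintro e e' (h | h | h | h | h | h)
    · exact Or.inl (hIE.symm _ _ h)
    · exact Or.inr (Or.inl (hIF.symm _ _ h))
    · exact Or.inr (Or.inr (Or.inr (Or.inl ⟨h.2, h.1⟩)))
    · exact Or.inr (Or.inr (Or.inl ⟨h.2, h.1⟩))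
    · exact Or.inr (Or.inr (Or.inr (Or.inr (Or.inr ⟨h.2, h.1⟩))))
    · exact Or.inr (Or.inr (Or.inr (Or.inr (Or.inl ⟨h.2, h.1⟩))))
  · -- confE
    rintro e e' (h | h | h | h | h | h)
    · exact ⟨Or.inl (hIE.confE _ _ h).1, Or.inl (hIE.confE _ _ h).2⟩
    · exact ⟨Or.inr (hIF.confE _ _ h).1, Or.inr (hIF.confE _ _ h).2⟩
    · exact ⟨Or.inl h.1.1, Or.inr h.2.1⟩
    · exact ⟨Or.inr h.1.1, Or.inl h.2.1⟩
    · exact ⟨Or.inl (hIE.finE h.1), Or.inr (hIF.finE h.2)⟩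
    · exact ⟨Or.inr (hIF.finE h.1), Or.inl (hIE.finE h.2)⟩
  · -- bunE
    rintro x e (h | h)
    · exact ⟨Or.inl (hIE.bunE _ _ h).1, fun a ha => Or.inl ((hIE.bunE _ _ h).2 ha)⟩
    · exact ⟨Or.inr (hIF.bunE _ _ h).1, fun a ha => Or.inr ((hIF.bunE _ _ h).2 ha)⟩
  · -- finE
    rintro e (h | h)
    · exact Or.inl (hIE.finE h)
    · exact Or.inr (hIF.finE h)
  · -- p3
    rintro x e (h | h) f hf hc
    · have hfE : f ∈ ℰ.E := (hIE.bunE _ _ h).2 hf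
      have heE : e ∈ ℰ.E := (hIE.bunE _ _ h).1
      rcases hc with hc | hc | hc | hc | hc | hc
      · exact hIE.p3 x e h f hf hc
      · exact notboth hdisj heE (hIF.confE _ _ hc).1
      · exact notboth hdisj hfE hc.2.1
      · exact notboth hdisj heE hc.1.1
      · exact notboth hdisj hfE (hIF.finE hc.2)
      · exact notboth hdisj heE (hIF.finE hc.1)
    · have hfF : f ∈ ℱ.E := (hIF.bunE _ _ h).2 hf
      have heF : e ∈ ℱ.E := (hIF.bunE _ _ h).1
      rcases hc with hc | hc | hc | hc | hc | hc
      · exact notboth hdisj (hIE.confE _ _ hc).1 heF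
      · exact hIF.p3 x e h f hf hc
      · exact notboth hdisj hc.1.1 heF
      · exact notboth hdisj hc.2.1 hfF
      · exact notboth hdisj (hIE.finE hc.1) heF
      · exact notboth hdisj (hIE.finE hc.2) hfF
  · -- wf
    intro e
    by_cases heE : e ∈ ℰ.E
    · refine acc_transfer ?_ e (hIE.wf e) heE
      intro x e' he' hb
      have := (choice_bundleL hdisj hIE hIF he' x).1 hb
      exact ⟨this, (hIE.bunE _ _ this).2⟩
    · by_cases heF : e ∈ ℱ.E
      · refine acc_transfer ?_ e (hIF.wf e) heF
        intro x e' he' hb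
        have := (choice_bundleR hdisj hIE hIF he' x).1 hb
        exact ⟨this, (hIF.bunE _ _ this).2⟩
      · refine Acc.intro _ ?_
        rintro f ⟨x, hx, hfx⟩
        rcases hx with hx | hx
        · exact absurd (hIE.bunE _ _ hx).1 heE
        · exact absurd (hIF.bunE _ _ hx).1 heF
  · -- pinit
    intro e he f hf hne
    rw [hbinit] at he hf
    rcases he with he | he <;> rcases hf with hf | hf
    · exact Or.inl (hIE.pinit e he f hf hne)
    · exact Or.inr (Or.inr (Or.inl ⟨he, hf⟩))
    · exact Or.inr (Or.inr (Or.inr (Or.inl ⟨he, hf⟩)))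
    · exact Or.inr (Or.inl (hIF.pinit e he f hf hne))
  · -- p2
    intro e1 e2 e3 h12 h23 hs12 hs23 hne hnb
    by_cases he1 : e1 ∈ ℰ.E
    · exact choice_p2_aux hdisj hIE hIF e1 e2 e3 h12 h23 hs12 hs23 hne hnb he1
    · have he1F : e1 ∈ ℱ.E := by
        rcases h12 with h | h | h | h | h | h
        · exact absurd (hIE.confE _ _ h).1 he1
        · exact (hIF.confE _ _ h).1
        · exact absurd h.1.1 he1
        · exact h.1.1
        · exact absurd (hIE.finE h.1) he1
        · exact hIF.finE h.1
      have hdisj' : ℱ.E ∩ ℰ.E = ∅ := by rw [Set.inter_comm]; exact hdisj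
      have hswap : ∀ a b, SameB (bchoice ℰ ℱ) a b → SameB (bchoice ℱ ℰ) a b := by
        intro a b h x
        constructor
        · intro hx
          exact (choice_swap_bundle x b).1 ((h x).1 ((choice_swap_bundle x a).2 hx))
        · intro hx
          exact (choice_swap_bundle x a).1 ((h x).2 ((choice_swap_bundle x b).2 hx))
      have := choice_p2_aux hdisj' hIF hIE e1 e2 e3
        ((choice_swap_conflict _ _).1 h12) ((choice_swap_conflict _ _).1 h23)
        (hswap _ _ hs12) (hswap _ _ hs23) hne
        (fun h => hnb ((choice_swap_bundle _ _).2 h)) he1F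
      exact (choice_swap_conflict _ _).2 this
  · -- p1
    intro e e' hc
    have hmonoE : ∀ (a b : Ev), ℰ.conflict a b → (bchoice ℰ ℱ).conflict a b :=
      fun a b h => Or.inl h
    have hmonoF : ∀ (a b : Ev), ℱ.conflict a b → (bchoice ℰ ℱ).conflict a b :=
      fun a b h => Or.inr (Or.inl h)
    have hbmonoE : ∀ (x : Set Ev) (a : Ev), ℰ.bundle x a → (bchoice ℰ ℱ).bundle x a :=
      fun x a h => Or.inl h
    have hbmonoF : ∀ (x : Set Ev) (a : Ev), ℱ.bundle x a → (bchoice ℰ ℱ).bundle x a :=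
      fun x a h => Or.inr h
    rcases hc with h | h | h | h | h | h
    · rcases hIE.p1 _ _ h with hs | hn
      · exact Or.inl ((choice_sameBL hdisj hIE hIF (hIE.confE _ _ h).1 (hIE.confE _ _ h).2).2 hs)
      · exact Or.inr (nce_mono hmonoE hbmonoE hn)
    · rcases hIF.p1 _ _ h with hs | hn
      · exact Or.inl ((choice_sameBR hdisj hIE hIF (hIF.confE _ _ h).1 (hIF.confE _ _ h).2).2 hs)
      · exact Or.inr (nce_mono hmonoF hbmonoF hn)
    · -- init × init : same (no) bundles
      refine Or.inl ?_
      intro x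
      exact iff_of_false (choice_nobundleL hdisj hIE hIF h.1 x) (choice_nobundleR hdisj hIE hIF h.2 x)
    · refine Or.inl ?_
      intro x
      exact iff_of_false (choice_nobundleR hdisj hIE hIF h.1 x) (choice_nobundleL hdisj hIE hIF h.2 x)
    · -- final × final
      by_cases h1i : e ∈ bInit ℰ
      · by_cases h2i : e' ∈ bInit ℱ
        · refine Or.inl (fun x => iff_of_false (choice_nobundleL hdisj hIE hIF h1i x)
            (choice_nobundleR hdisj hIE hIF h2i x))
        · -- e' non-initial: right-blocked
          have : ∃ y, ℱ.bundle y e' := by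
            by_contra hno; push_neg at hno; exact h2i ⟨hIF.finE h.2, hno⟩
          obtain ⟨y, hy⟩ := this
          refine Or.inr (Or.inr (Or.inl ⟨y, Or.inr hy, ?_⟩))
          intro g hg
          refine Or.inr (bad2_symm ?_ (choice_bad2 hdisj hIE hIF e (hIE.wf e) (hIE.finE h.1)
            g (hIF.wf g) ((hIF.bunE _ _ hy).2 hg)))
          intro a b hab
          rcases hab with hh | hh | hh | hh | hh | hh
          · exact Or.inl (hIE.symm _ _ hh)
          · exact Or.inr (Or.inl (hIF.symm _ _ hh))
          · exact Or.inr (Or.inr (Or.inr (Or.inl ⟨hh.2, hh.1⟩)))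
          · exact Or.inr (Or.inr (Or.inl ⟨hh.2, hh.1⟩))
          · exact Or.inr (Or.inr (Or.inr (Or.inr (Or.inr ⟨hh.2, hh.1⟩))))
          · exact Or.inr (Or.inr (Or.inr (Or.inr (Or.inl ⟨hh.2, hh.1⟩))))
      · -- e non-initial: left-blocked
        have : ∃ y, ℰ.bundle y e := by
          by_contra hno; push_neg at hno; exact h1i ⟨hIE.finE h.1, hno⟩
        obtain ⟨y, hy⟩ := this
        refine Or.inr (Or.inl ⟨y, Or.inl hy, ?_⟩)
        intro f hf
        exact Or.inr (choice_bad2 hdisj hIE hIF f (hIE.wf f) ((hIE.bunE _ _ hy).2 hf)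
          e' (hIF.wf e') (hIF.finE h.2))
    · -- final × final, other orientation
      by_cases h1i : e ∈ bInit ℱ
      · by_cases h2i : e' ∈ bInit ℰ
        · refine Or.inl (fun x => iff_of_false (choice_nobundleR hdisj hIE hIF h1i x)
            (choice_nobundleL hdisj hIE hIF h2i x))
        · have : ∃ y, ℰ.bundle y e' := by
            by_contra hno; push_neg at hno; exact h2i ⟨hIE.finE h.2, hno⟩
          obtain ⟨y, hy⟩ := this
          refine Or.inr (Or.inr (Or.inl ⟨y, Or.inl hy, ?_⟩))
          intro g hg
          exact Or.inr (choice_bad2 hdisj hIE hIF g (hIE.wf g) ((hIE.bunE _ _ hy).2 hg)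
            e (hIF.wf e) (hIF.finE h.1))
      · have : ∃ y, ℱ.bundle y e := by
          by_contra hno; push_neg at hno; exact h1i ⟨hIF.finE h.1, hno⟩
        obtain ⟨y, hy⟩ := this
        refine Or.inr (Or.inl ⟨y, Or.inr hy, ?_⟩)
        intro f hf
        refine Or.inr (bad2_symm ?_ (choice_bad2 hdisj hIE hIF e' (hIE.wf e') (hIE.finE h.2)
          f (hIF.wf f) ((hIF.bunE _ _ hy).2 hf)))
        intro a b hab
        rcases hab with hh | hh | hh | hh | hh | hh
        · exact Or.inl (hIE.symm _ _ hh)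
        · exact Or.inr (Or.inl (hIF.symm _ _ hh))
        · exact Or.inr (Or.inr (Or.inr (Or.inl ⟨hh.2, hh.1⟩)))
        · exact Or.inr (Or.inr (Or.inl ⟨hh.2, hh.1⟩))
        · exact Or.inr (Or.inr (Or.inr (Or.inr (Or.inr ⟨hh.2, hh.1⟩))))
        · exact Or.inr (Or.inr (Or.inr (Or.inr (Or.inl ⟨hh.2, hh.1⟩))))

end withInv
end Choice
section Seq
variable {ℰ ℱ : BES Ev A} (hdisj : ℰ.E ∩ ℱ.E = ∅) (hIE : Inv ℰ) (hIF : Inv ℱ)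
include hdisj hIE hIF

lemma seq_bundleL {e : Ev} (he : e ∈ ℰ.E) (x : Set Ev) :
    (bseq ℰ ℱ).bundle x e ↔ ℰ.bundle x e := by
  constructor
  · rintro (h | h | ⟨rfl, h⟩)
    · exact h
    · exact absurd he (fun he' => notboth hdisj he' (hIF.bunE _ _ h).1)
    · exact absurd he (fun he' => notboth hdisj he' h.1)
  · exact Or.inl

lemma seq_sameBL {e e' : Ev} (he : e ∈ ℰ.E) (he' : e' ∈ ℰ.E) :
    SameB (bseq ℰ ℱ) e e' ↔ SameB ℰ e e' := by
  constructor <;> intro h x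
  · rw [← seq_bundleL hdisj hIE hIF he, ← seq_bundleL hdisj hIE hIF he']; exact h x
  · rw [seq_bundleL hdisj hIE hIF he, seq_bundleL hdisj hIE hIF he']; exact h x

lemma seq_sameBR {e e' : Ev} (he : e ∈ ℱ.E) (he' : e' ∈ ℱ.E)
    (hsb : SameB (bseq ℰ ℱ) e e') (hnb : ¬ (bseq ℰ ℱ).bundle ∅ e) :
    SameB ℱ e e' := by
  have key : ∀ a b : Ev, a ∈ ℱ.E → b ∈ ℱ.E → (∀ x, (bseq ℰ ℱ).bundle x a →
      (bseq ℰ ℱ).bundle x b) → ¬ (bseq ℰ ℱ).bundle ∅ a →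
      ∀ x, ℱ.bundle x a → ℱ.bundle x b := by
    intro a b ha hb hab hnba x hx
    rcases hab x (Or.inr (Or.inl hx)) with h | h | ⟨hxeq, h⟩
    · exact absurd hb (fun hb' => notboth hdisj (hIE.bunE _ _ h).1 hb')
    · exact h
    · -- x = ℰ.final but x ⊆ ℱ.E, so x = ∅
      have hxF : x ⊆ ℱ.E := (hIF.bunE _ _ hx).2
      have hxe : x = ∅ := by
        ext c
        simp only [Set.mem_empty_iff_false, iff_false]
        exact fun hc => notboth hdisj (hIE.finE (hxeq ▸ hc)) (hxF hc)
      rw [hxe] at hx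
      exact absurd (Or.inr (Or.inl hx)) hnba
  have hnb' : ¬ (bseq ℰ ℱ).bundle ∅ e' := fun h => hnb ((hsb ∅).2 h)
  intro x
  exact ⟨key e e' he he' (fun y => (hsb y).1) hnb x,
         key e' e he' he (fun y => (hsb y).2) hnb' x⟩

lemma seq_binit : bInit (bseq ℰ ℱ) = bInit ℰ := by
  ext e
  constructor
  · rintro ⟨he, hnb⟩
    rcases he with he | he
    · exact ⟨he, fun x hx => hnb x (Or.inl hx)⟩
    · exfalso
      by_cases hei : e ∈ bInit ℱ
      · exact hnb ℰ.final (Or.inr (Or.inr ⟨rfl, hei⟩))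
      · have : ∃ y, ℱ.bundle y e := by
          by_contra hno; push_neg at hno; exact hei ⟨he, hno⟩
        obtain ⟨y, hy⟩ := this
        exact hnb y (Or.inr (Or.inl hy))
  · rintro ⟨he, hnb⟩
    refine ⟨Or.inl he, ?_⟩
    rintro x (h | h | ⟨rfl, h⟩)
    · exact hnb x h
    · exact notboth hdisj he (hIF.bunE _ _ h).1
    · exact notboth hdisj he h.1

lemma inv_seq : Inv (bseq ℰ ℱ) := by
  refine ⟨?_, ?_, ?_, ?_, ?_, ?_, ?_, ?_, ?_, ?_⟩
  · rintro e (h | h)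
    · exact hIE.irrefl e h
    · exact hIF.irrefl e h
  · rintro e e' (h | h)
    · exact Or.inl (hIE.symm _ _ h)
    · exact Or.inr (hIF.symm _ _ h)
  · rintro e e' (h | h)
    · exact ⟨Or.inl (hIE.confE _ _ h).1, Or.inl (hIE.confE _ _ h).2⟩
    · exact ⟨Or.inr (hIF.confE _ _ h).1, Or.inr (hIF.confE _ _ h).2⟩
  · rintro x e (h | h | ⟨rfl, h⟩)
    · exact ⟨Or.inl (hIE.bunE _ _ h).1, fun a ha => Or.inl ((hIE.bunE _ _ h).2 ha)⟩
    · exact ⟨Or.inr (hIF.bunE _ _ h).1, fun a ha => Or.inr ((hIF.bunE _ _ h).2 ha)⟩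
    · exact ⟨Or.inr h.1, fun a ha => Or.inl (hIE.finE ha)⟩
  · exact fun e h => Or.inr (hIF.finE h)
  · rintro x e (h | h | ⟨rfl, h⟩) f hf hc
    · have hfE : f ∈ ℰ.E := (hIE.bunE _ _ h).2 hf
      rcases hc with hc | hc
      · exact hIE.p3 x e h f hf hc
      · exact notboth hdisj (hIE.bunE _ _ h).1 (hIF.confE _ _ hc).1
    · have hfF : f ∈ ℱ.E := (hIF.bunE _ _ h).2 hf
      rcases hc with hc | hc
      · exact notboth hdisj (hIE.confE _ _ hc).1 (hIF.bunE _ _ h).1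
      · exact hIF.p3 x e h f hf hc
    · rcases hc with hc | hc
      · exact notboth hdisj (hIE.confE _ _ hc).1 h.1
      · exact notboth hdisj (hIE.finE hf) (hIF.confE _ _ hc).2
  · -- wf
    have hL : ∀ e, Acc (prec ℰ) e → e ∈ ℰ.E → Acc (prec (bseq ℰ ℱ)) e := by
      refine acc_transfer ?_
      intro x e he hb
      have := (seq_bundleL hdisj hIE hIF he x).1 hb
      exact ⟨this, (hIE.bunE _ _ this).2⟩
    have hR : ∀ e, Acc (prec ℱ) e → e ∈ ℱ.E → Acc (prec (bseq ℰ ℱ)) e := by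
      intro e he
      induction he with
      | intro e' _ ih =>
        intro heF
        refine Acc.intro _ ?_
        rintro f ⟨x, (hx | hx | ⟨rfl, hx⟩), hfx⟩
        · exact absurd (hIE.bunE _ _ hx).1 (fun h => notboth hdisj h heF)
        · exact ih f ⟨x, hx, hfx⟩ ((hIF.bunE _ _ hx).2 hfx)
        · exact hL f (hIE.wf f) (hIE.finE hfx)
    intro e
    by_cases heE : e ∈ ℰ.E
    · exact hL e (hIE.wf e) heE
    · by_cases heF : e ∈ ℱ.E
      · exact hR e (hIF.wf e) heF
      · refine Acc.intro _ ?_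
        rintro f ⟨x, (hx | hx | ⟨rfl, hx⟩), hfx⟩
        · exact absurd (hIE.bunE _ _ hx).1 heE
        · exact absurd (hIF.bunE _ _ hx).1 heF
        · exact absurd hx.1 heF
  · intro e he f hf hne
    rw [seq_binit hdisj hIE hIF] at he hf
    exact Or.inl (hIE.pinit e he f hf hne)
  · -- p2
    intro e1 e2 e3 h12 h23 hs12 hs23 hne hnb
    rcases h12 with h12 | h12
    · have he1 : e1 ∈ ℰ.E := (hIE.confE _ _ h12).1
      have he2 : e2 ∈ ℰ.E := (hIE.confE _ _ h12).2
      rcases h23 with h23 | h23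
      · have he3 : e3 ∈ ℰ.E := (hIE.confE _ _ h23).2
        refine Or.inl (hIE.p2 e1 e2 e3 h12 h23
          ((seq_sameBL hdisj hIE hIF he1 he2).1 hs12)
          ((seq_sameBL hdisj hIE hIF he2 he3).1 hs23) hne
          (fun h => hnb (Or.inl h)))
      · exact absurd (hIF.confE _ _ h23).1 (fun h => notboth hdisj he2 h)
    · have he1 : e1 ∈ ℱ.E := (hIF.confE _ _ h12).1
      have he2 : e2 ∈ ℱ.E := (hIF.confE _ _ h12).2
      rcases h23 with h23 | h23
      · exact absurd (hIE.confE _ _ h23).1 (fun h => notboth hdisj h he2)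
      · have he3 : e3 ∈ ℱ.E := (hIF.confE _ _ h23).2
        have hnb2 : ¬ (bseq ℰ ℱ).bundle ∅ e2 := fun h => hnb ((hs12 ∅).2 h)
        refine Or.inr (hIF.p2 e1 e2 e3 h12 h23
          (seq_sameBR hdisj hIE hIF he1 he2 hs12 hnb)
          (seq_sameBR hdisj hIE hIF he2 he3 hs23 hnb2) hne
          (fun h => hnb (Or.inr (Or.inl h))))
  · -- p1
    rintro e e' (h | h)
    · rcases hIE.p1 _ _ h with hs | hn
      · exact Or.inl ((seq_sameBL hdisj hIE hIF (hIE.confE _ _ h).1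
          (hIE.confE _ _ h).2).2 hs)
      · exact Or.inr (nce_mono (fun a b hc => Or.inl hc) (fun x a hb => Or.inl hb) hn)
    · rcases hIF.p1 _ _ h with hs | hn
      · refine Or.inl ?_
        have he : e ∈ ℱ.E := (hIF.confE _ _ h).1
        have he' : e' ∈ ℱ.E := (hIF.confE _ _ h).2
        have hinit : e ∈ bInit ℱ ↔ e' ∈ bInit ℱ := by
          constructor <;> intro hi
          · exact ⟨he', fun x hx => hi.2 x ((hs x).2 hx)⟩
          · exact ⟨he, fun x hx => hi.2 x ((hs x).1 hx)⟩
        intro x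
        constructor
        · rintro (hx | hx | ⟨rfl, hx⟩)
          · exact absurd (hIE.bunE _ _ hx).1 (fun hh => notboth hdisj hh he)
          · exact Or.inr (Or.inl ((hs x).1 hx))
          · exact Or.inr (Or.inr ⟨rfl, hinit.1 hx⟩)
        · rintro (hx | hx | ⟨rfl, hx⟩)
          · exact absurd (hIE.bunE _ _ hx).1 (fun hh => notboth hdisj hh he')
          · exact Or.inr (Or.inl ((hs x).2 hx))
          · exact Or.inr (Or.inr ⟨rfl, hinit.2 hx⟩)
      · exact Or.inr (nce_mono (fun a b hc => Or.inr hc)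
          (fun x a hb => Or.inr (Or.inl hb)) hn)

end Seq
section Par
variable {ℰ ℱ : BES Ev A} {d₁ d₂ : Ev} (hdisj : ℰ.E ∩ ℱ.E = ∅)
  (hIE : Inv ℰ) (hIF : Inv ℱ) (hd12 : d₁ ≠ d₂)
  (hd1 : d₁ ∉ ℰ.E ∪ ℱ.E) (hd2 : d₂ ∉ ℰ.E ∪ ℱ.E)
include hdisj hIE hIF hd12 hd1 hd2

lemma par_bundleL {e : Ev} (he : e ∈ ℰ.E) (x : Set Ev) :
    (bpar ℰ ℱ d₁ d₂).bundle x e ↔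
      (ℰ.bundle x e ∨ (x = {d₁} ∧ e ∈ bInit ℰ)) := by
  constructor
  · rintro (h | h | ⟨rfl, (h | h)⟩ | ⟨rfl, rfl⟩ | ⟨rfl, rfl⟩)
    · exact Or.inl h
    · exact absurd he (fun he' => notboth hdisj he' (hIF.bunE _ _ h).1)
    · exact Or.inr ⟨rfl, h⟩
    · exact absurd he (fun he' => notboth hdisj he' h.1)
    · exact absurd (Or.inl he) hd2
    · exact absurd (Or.inl he) hd2
  · rintro (h | ⟨rfl, h⟩)
    · exact Or.inl h
    · exact Or.inr (Or.inr (Or.inl ⟨rfl, Or.inl h⟩))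

lemma par_bundleR {e : Ev} (he : e ∈ ℱ.E) (x : Set Ev) :
    (bpar ℰ ℱ d₁ d₂).bundle x e ↔
      (ℱ.bundle x e ∨ (x = {d₁} ∧ e ∈ bInit ℱ)) := by
  constructor
  · rintro (h | h | ⟨rfl, (h | h)⟩ | ⟨rfl, rfl⟩ | ⟨rfl, rfl⟩)
    · exact absurd he (fun he' => notboth hdisj (hIE.bunE _ _ h).1 he')
    · exact Or.inl h
    · exact absurd he (fun he' => notboth hdisj h.1 he')
    · exact Or.inr ⟨rfl, h⟩
    · exact absurd (Or.inr he) hd2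
    · exact absurd (Or.inr he) hd2
  · rintro (h | ⟨rfl, h⟩)
    · exact Or.inr (Or.inl h)
    · exact Or.inr (Or.inr (Or.inl ⟨rfl, Or.inr h⟩))

lemma par_sameBL {e e' : Ev} (he : e ∈ ℰ.E) (he' : e' ∈ ℰ.E) :
    SameB (bpar ℰ ℱ d₁ d₂) e e' ↔ SameB ℰ e e' := by
  constructor <;> intro h x
  · constructor
    · intro hx
      rcases (par_bundleL hdisj hIE hIF hd12 hd1 hd2 he' x).1
        ((h x).1 ((par_bundleL hdisj hIE hIF hd12 hd1 hd2 he x).2 (Or.inl hx))) with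
        hh | ⟨rfl, hh⟩
      · exact hh
      · exact absurd ((hIE.bunE _ _ hx).2 rfl) (fun hh' => hd1 (Or.inl hh'))
    · intro hx
      rcases (par_bundleL hdisj hIE hIF hd12 hd1 hd2 he x).1
        ((h x).2 ((par_bundleL hdisj hIE hIF hd12 hd1 hd2 he' x).2 (Or.inl hx))) with
        hh | ⟨rfl, hh⟩
      · exact hh
      · exact absurd ((hIE.bunE _ _ hx).2 rfl) (fun hh' => hd1 (Or.inl hh'))
  · rw [par_bundleL hdisj hIE hIF hd12 hd1 hd2 he,
        par_bundleL hdisj hIE hIF hd12 hd1 hd2 he']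
    constructor
    · rintro (hx | ⟨rfl, hx⟩)
      · exact Or.inl ((h x).1 hx)
      · exact Or.inr ⟨rfl, ⟨he', fun y hy => hx.2 y ((h y).2 hy)⟩⟩
    · rintro (hx | ⟨rfl, hx⟩)
      · exact Or.inl ((h x).2 hx)
      · exact Or.inr ⟨rfl, ⟨he, fun y hy => hx.2 y ((h y).1 hy)⟩⟩

lemma par_sameBR {e e' : Ev} (he : e ∈ ℱ.E) (he' : e' ∈ ℱ.E) :
    SameB (bpar ℰ ℱ d₁ d₂) e e' ↔ SameB ℱ e e' := by
  constructor <;> intro h x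
  · constructor
    · intro hx
      rcases (par_bundleR hdisj hIE hIF hd12 hd1 hd2 he' x).1
        ((h x).1 ((par_bundleR hdisj hIE hIF hd12 hd1 hd2 he x).2 (Or.inl hx))) with
        hh | ⟨rfl, hh⟩
      · exact hh
      · exact absurd ((hIF.bunE _ _ hx).2 rfl) (fun hh' => hd1 (Or.inr hh'))
    · intro hx
      rcases (par_bundleR hdisj hIE hIF hd12 hd1 hd2 he x).1
        ((h x).2 ((par_bundleR hdisj hIE hIF hd12 hd1 hd2 he' x).2 (Or.inl hx))) with
        hh | ⟨rfl, hh⟩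
      · exact hh
      · exact absurd ((hIF.bunE _ _ hx).2 rfl) (fun hh' => hd1 (Or.inr hh'))
  · rw [par_bundleR hdisj hIE hIF hd12 hd1 hd2 he,
        par_bundleR hdisj hIE hIF hd12 hd1 hd2 he']
    constructor
    · rintro (hx | ⟨rfl, hx⟩)
      · exact Or.inl ((h x).1 hx)
      · exact Or.inr ⟨rfl, ⟨he', fun y hy => hx.2 y ((h y).2 hy)⟩⟩
    · rintro (hx | ⟨rfl, hx⟩)
      · exact Or.inl ((h x).2 hx)
      · exact Or.inr ⟨rfl, ⟨he, fun y hy => hx.2 y ((h y).1 hy)⟩⟩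

lemma inv_par : Inv (bpar ℰ ℱ d₁ d₂) := by
  have hE : ∀ {e : Ev}, e ∈ ℰ.E → e ∈ (bpar ℰ ℱ d₁ d₂).E :=
    fun he => Or.inl (Or.inl he)
  have hF : ∀ {e : Ev}, e ∈ ℱ.E → e ∈ (bpar ℰ ℱ d₁ d₂).E :=
    fun he => Or.inl (Or.inr he)
  refine ⟨?_, ?_, ?_, ?_, ?_, ?_, ?_, ?_, ?_, ?_⟩
  · rintro e (h | h)
    · exact hIE.irrefl e h
    · exact hIF.irrefl e h
  · rintro e e' (h | h)
    · exact Or.inl (hIE.symm _ _ h)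
    · exact Or.inr (hIF.symm _ _ h)
  · rintro e e' (h | h)
    · exact ⟨hE (hIE.confE _ _ h).1, hE (hIE.confE _ _ h).2⟩
    · exact ⟨hF (hIF.confE _ _ h).1, hF (hIF.confE _ _ h).2⟩
  · rintro x e (h | h | ⟨rfl, (h | h)⟩ | ⟨rfl, rfl⟩ | ⟨rfl, rfl⟩)
    · exact ⟨hE (hIE.bunE _ _ h).1, fun a ha => hE ((hIE.bunE _ _ h).2 ha)⟩
    · exact ⟨hF (hIF.bunE _ _ h).1, fun a ha => hF ((hIF.bunE _ _ h).2 ha)⟩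
    · refine ⟨hE h.1, ?_⟩
      rintro a rfl
      exact Or.inr (Or.inl rfl)
    · refine ⟨hF h.1, ?_⟩
      rintro a rfl
      exact Or.inr (Or.inl rfl)
    · exact ⟨Or.inr (Or.inr rfl), fun a ha => hE (hIE.finE ha)⟩
    · exact ⟨Or.inr (Or.inr rfl), fun a ha => hF (hIF.finE ha)⟩
  · rintro e rfl
    exact Or.inr (Or.inr rfl)
  · -- p3
    rintro x e (h | h | ⟨rfl, (h | h)⟩ | ⟨rfl, rfl⟩ | ⟨rfl, rfl⟩) f hf hc
    · rcases hc with hc | hc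
      · exact hIE.p3 x e h f hf hc
      · exact notboth hdisj ((hIE.bunE _ _ h).2 hf) (hIF.confE _ _ hc).2
    · rcases hc with hc | hc
      · exact notboth hdisj (hIE.confE _ _ hc).2 ((hIF.bunE _ _ h).2 hf)
      · exact hIF.p3 x e h f hf hc
    · rcases hf with rfl
      rcases hc with hc | hc
      · exact hd1 (Or.inl (hIE.confE _ _ hc).2)
      · exact hd1 (Or.inr (hIF.confE _ _ hc).2)
    · rcases hf with rfl
      rcases hc with hc | hc
      · exact hd1 (Or.inl (hIE.confE _ _ hc).2)
      · exact hd1 (Or.inr (hIF.confE _ _ hc).2)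
    · rcases hc with hc | hc
      · exact hd2 (Or.inl (hIE.confE _ _ hc).1)
      · exact hd2 (Or.inr (hIF.confE _ _ hc).1)
    · rcases hc with hc | hc
      · exact hd2 (Or.inl (hIE.confE _ _ hc).1)
      · exact hd2 (Or.inr (hIF.confE _ _ hc).1)
  · -- wf
    have hd1acc : Acc (prec (bpar ℰ ℱ d₁ d₂)) d₁ := by
      refine Acc.intro _ ?_
      rintro f ⟨x, (hx | hx | ⟨rfl, (hx | hx)⟩ | ⟨rfl, hx⟩ | ⟨rfl, hx⟩), hfx⟩
      · exact absurd (Or.inl (hIE.bunE _ _ hx).1) hd1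
      · exact absurd (Or.inr (hIF.bunE _ _ hx).1) hd1
      · exact absurd (Or.inl hx.1) hd1
      · exact absurd (Or.inr hx.1) hd1
      · exact absurd hx hd12
      · exact absurd hx hd12
    have hL : ∀ e, Acc (prec ℰ) e → e ∈ ℰ.E → Acc (prec (bpar ℰ ℱ d₁ d₂)) e := by
      intro e he
      induction he with
      | intro e' _ ih =>
        intro heE
        refine Acc.intro _ ?_
        rintro f ⟨x, hx, hfx⟩
        rcases (par_bundleL hdisj hIE hIF hd12 hd1 hd2 heE x).1 hx with hx' | ⟨rfl, _⟩
        · exact ih f ⟨x, hx', hfx⟩ ((hIE.bunE _ _ hx').2 hfx)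
        · rcases hfx with rfl
          exact hd1acc
    have hR : ∀ e, Acc (prec ℱ) e → e ∈ ℱ.E → Acc (prec (bpar ℰ ℱ d₁ d₂)) e := by
      intro e he
      induction he with
      | intro e' _ ih =>
        intro heF
        refine Acc.intro _ ?_
        rintro f ⟨x, hx, hfx⟩
        rcases (par_bundleR hdisj hIE hIF hd12 hd1 hd2 heF x).1 hx with hx' | ⟨rfl, _⟩
        · exact ih f ⟨x, hx', hfx⟩ ((hIF.bunE _ _ hx').2 hfx)
        · rcases hfx with rfl
          exact hd1acc
    intro e
    by_cases heE : e ∈ ℰ.E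
    · exact hL e (hIE.wf e) heE
    by_cases heF : e ∈ ℱ.E
    · exact hR e (hIF.wf e) heF
    refine Acc.intro _ ?_
    rintro f ⟨x, (hx | hx | ⟨rfl, (hx | hx)⟩ | ⟨rfl, hx⟩ | ⟨rfl, hx⟩), hfx⟩
    · exact absurd (hIE.bunE _ _ hx).1 heE
    · exact absurd (hIF.bunE _ _ hx).1 heF
    · exact absurd hx.1 heE
    · exact absurd hx.1 heF
    · exact hL f (hIE.wf f) (hIE.finE hfx)
    · exact hR f (hIF.wf f) (hIF.finE hfx)
  · -- pinit : every initial event is d₁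
    have hchar : ∀ e, e ∈ bInit (bpar ℰ ℱ d₁ d₂) → e = d₁ := by
      rintro e ⟨he, hnb⟩
      rcases he with (he | he) | he
      · exfalso
        by_cases hei : e ∈ bInit ℰ
        · exact hnb {d₁} (Or.inr (Or.inr (Or.inl ⟨rfl, Or.inl hei⟩)))
        · have : ∃ y, ℰ.bundle y e := by
            by_contra hno; push_neg at hno; exact hei ⟨he, hno⟩
          obtain ⟨y, hy⟩ := this
          exact hnb y (Or.inl hy)
      · exfalso
        by_cases hei : e ∈ bInit ℱ
        · exact hnb {d₁} (Or.inr (Or.inr (Or.inl ⟨rfl, Or.inr hei⟩)))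
        · have : ∃ y, ℱ.bundle y e := by
            by_contra hno; push_neg at hno; exact hei ⟨he, hno⟩
          obtain ⟨y, hy⟩ := this
          exact hnb y (Or.inr (Or.inl hy))
      · rcases he with rfl | rfl
        · rfl
        · exact absurd (hnb ℰ.final (Or.inr (Or.inr (Or.inr (Or.inl ⟨rfl, rfl⟩))))).elim id
    intro e he f hf hne
    rw [hchar e he, hchar f hf] at hne
    exact absurd rfl hne
  · -- p2
    intro e1 e2 e3 h12 h23 hs12 hs23 hne hnb
    rcases h12 with h12 | h12
    · have he1 : e1 ∈ ℰ.E := (hIE.confE _ _ h12).1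
      have he2 : e2 ∈ ℰ.E := (hIE.confE _ _ h12).2
      rcases h23 with h23 | h23
      · have he3 : e3 ∈ ℰ.E := (hIE.confE _ _ h23).2
        exact Or.inl (hIE.p2 e1 e2 e3 h12 h23
          ((par_sameBL hdisj hIE hIF hd12 hd1 hd2 he1 he2).1 hs12)
          ((par_sameBL hdisj hIE hIF hd12 hd1 hd2 he2 he3).1 hs23) hne
          (fun h => hnb (Or.inl h)))
      · exact absurd (hIF.confE _ _ h23).1 (fun h => notboth hdisj he2 h)
    · have he1 : e1 ∈ ℱ.E := (hIF.confE _ _ h12).1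
      have he2 : e2 ∈ ℱ.E := (hIF.confE _ _ h12).2
      rcases h23 with h23 | h23
      · exact absurd (hIE.confE _ _ h23).1 (fun h => notboth hdisj h he2)
      · have he3 : e3 ∈ ℱ.E := (hIF.confE _ _ h23).2
        exact Or.inr (hIF.p2 e1 e2 e3 h12 h23
          ((par_sameBR hdisj hIE hIF hd12 hd1 hd2 he1 he2).1 hs12)
          ((par_sameBR hdisj hIE hIF hd12 hd1 hd2 he2 he3).1 hs23) hne
          (fun h => hnb (Or.inr (Or.inl h))))
  · -- p1
    rintro e e' (h | h)
    · rcases hIE.p1 _ _ h with hs | hn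
      · exact Or.inl ((par_sameBL hdisj hIE hIF hd12 hd1 hd2
          (hIE.confE _ _ h).1 (hIE.confE _ _ h).2).2 hs)
      · exact Or.inr (nce_mono (fun a b hc => Or.inl hc) (fun x a hb => Or.inl hb) hn)
    · rcases hIF.p1 _ _ h with hs | hn
      · exact Or.inl ((par_sameBR hdisj hIE hIF hd12 hd1 hd2
          (hIF.confE _ _ h).1 (hIF.confE _ _ h).2).2 hs)
      · exact Or.inr (nce_mono (fun a b hc => Or.inr hc)
          (fun x a hb => Or.inr (Or.inl hb)) hn)

end Par
section Star
variable {ℰ ℱ 𝒮 : BES Ev A}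

lemma subBES_refl {ℰ : BES Ev A} (hI : Inv ℰ) : SubBES ℰ ℰ :=
  ⟨Set.Subset.refl _,
   fun e e' => ⟨fun h => ⟨h, (hI.confE _ _ h).1, (hI.confE _ _ h).2⟩, fun h => h.1⟩,
   fun _ _ h => h, fun x e h _ => ⟨(hI.bunE _ _ h).2, h⟩, fun _ _ => rfl,
   fun e => ⟨fun h => ⟨h, hI.finE h⟩, fun h => h.1⟩⟩

lemma subBES_trans {ℰ ℱ 𝒢 : BES Ev A} (h1 : SubBES ℰ ℱ) (h2 : SubBES ℱ 𝒢) :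
    SubBES ℰ 𝒢 := by
  obtain ⟨hE1, hc1, hbu1, hbd1, hl1, hf1⟩ := h1
  obtain ⟨hE2, hc2, hbu2, hbd2, hl2, hf2⟩ := h2
  refine ⟨hE1.trans hE2, ?_, ?_, ?_, ?_, ?_⟩
  · intro e e'
    rw [hc1 e e', hc2 e e']
    constructor
    · rintro ⟨⟨h, _, _⟩, he, he'⟩
      exact ⟨h, he, he'⟩
    · rintro ⟨h, he, he'⟩
      exact ⟨⟨h, hE1 he, hE1 he'⟩, he, he'⟩
  · exact fun x e h => hbu2 x e (hbu1 x e h)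
  · intro x e h he
    obtain ⟨hx2, hb2⟩ := hbd2 x e h (hE1 he)
    exact hbd1 x e hb2 he
  · exact fun e he => (hl1 e he).trans (hl2 e (hE1 he))
  · intro e
    rw [hf1 e, hf2 e]
    constructor
    · rintro ⟨⟨h, _⟩, he⟩
      exact ⟨h, he⟩
    · rintro ⟨h, he⟩
      exact ⟨⟨h, hE1 he⟩, he⟩

lemma inv_star (hIE : Inv ℰ) (hIF : Inv ℱ) (hstar : IsStarOf ℰ ℱ 𝒮)
    (ihchoice : ∀ ℰ' ℱ' : BES Ev A, Inv ℰ' → Inv ℱ' → ℰ'.E ∩ ℱ'.E = ∅ →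
      Inv (bchoice ℰ' ℱ'))
    (ihseq : ∀ ℰ' ℱ' : BES Ev A, Inv ℰ' → Inv ℱ' → ℰ'.E ∩ ℱ'.E = ∅ →
      Inv (bseq ℰ' ℱ')) : Inv 𝒮 := by
  obtain ⟨c, hc0, hstep, hu⟩ := hstar
  obtain ⟨huE, huC, huB, _, _, huF⟩ := hu
  -- invariant for every element of the chain
  have hInv : ∀ i, Inv (c i) := by
    intro i
    induction i with
    | zero =>
      obtain ⟨g, hg, heq⟩ := hc0
      rw [heq]
      exact inv_rename hg hIF
    | succ i ih =>
      obtain ⟨ℰ', ℱ', hcE, hcF, hdF, hdE, heq, _⟩ := hstep i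
      obtain ⟨g1, hg1, heq1⟩ := hcE
      obtain ⟨g2, hg2, heq2⟩ := hcF
      have hIE' : Inv ℰ' := heq1 ▸ inv_rename hg1 hIE
      have hIF' : Inv ℱ' := heq2 ▸ inv_rename hg2 hIF
      rw [heq]
      exact ihchoice ℱ' (bseq ℰ' (c i)) hIF' (ihseq ℰ' (c i) hIE' ih hdE) hdF
  -- chain of sub-BES
  have hsub : ∀ i j, i ≤ j → SubBES (c i) (c j) := by
    intro i j hij
    induction j, hij using Nat.le_induction with
    | base => exact subBES_refl (hInv i)
    | succ j hij ih =>
      obtain ⟨ℰ', ℱ', _, _, _, _, _, hs⟩ := hstep j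
      exact subBES_trans ih hs
  -- transfer lemmas
  have hEup : ∀ {i e}, e ∈ (c i).E → e ∈ 𝒮.E := by
    intro i e he
    rw [huE]
    exact Set.mem_iUnion.2 ⟨i, he⟩
  have hbup : ∀ {i x e}, (c i).bundle x e → 𝒮.bundle x e :=
    fun {i x e} h => (huB x e).2 ⟨i, h⟩
  have hcup : ∀ {i e e'}, (c i).conflict e e' → 𝒮.conflict e e' :=
    fun {i e e'} h => (huC e e').2 ⟨i, h⟩
  have hbdown : ∀ {i x e}, 𝒮.bundle x e → e ∈ (c i).E → (c i).bundle x e := by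
    intro i x e h he
    obtain ⟨j, hj⟩ := (huB x e).1 h
    rcases le_total j i with hji | hij
    · exact (hsub j i hji).2.2.1 x e hj
    · exact ((hsub i j hij).2.2.2.1 x e hj he).2
  have hcdown : ∀ {i e e'}, 𝒮.conflict e e' → e ∈ (c i).E → e' ∈ (c i).E →
      (c i).conflict e e' := by
    intro i e e' h he he'
    obtain ⟨j, hj⟩ := (huC e e').1 h
    rcases le_total j i with hji | hij
    · exact ((hsub j i hji).2.1 e e').1 hj |>.1
    · have hk : (c j).conflict e e' := hj
      exact ((hsub i j hij).2.1 e e').2 ⟨hk, he, he'⟩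
  have hsdown : ∀ {i e e'}, SameB 𝒮 e e' → e ∈ (c i).E → e' ∈ (c i).E →
      SameB (c i) e e' := by
    intro i e e' h he he' x
    constructor
    · intro hx
      exact hbdown ((h x).1 (hbup hx)) he'
    · intro hx
      exact hbdown ((h x).2 (hbup hx)) he
  have hsup : ∀ {i e e'}, SameB (c i) e e' → e ∈ (c i).E → e' ∈ (c i).E →
      SameB 𝒮 e e' := by
    intro i e e' h he he' x
    constructor
    · intro hx
      exact hbup ((h x).1 (hbdown hx he))
    · intro hx
      exact hbup ((h x).2 (hbdown hx he'))
  refine ⟨?_, ?_, ?_, ?_, ?_, ?_, ?_, ?_, ?_, ?_⟩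
  · intro e h
    obtain ⟨i, hi⟩ := (huC e e).1 h
    exact (hInv i).irrefl e hi
  · intro e e' h
    obtain ⟨i, hi⟩ := (huC e e').1 h
    exact hcup ((hInv i).symm _ _ hi)
  · intro e e' h
    obtain ⟨i, hi⟩ := (huC e e').1 h
    exact ⟨hEup ((hInv i).confE _ _ hi).1, hEup ((hInv i).confE _ _ hi).2⟩
  · intro x e h
    obtain ⟨i, hi⟩ := (huB x e).1 h
    exact ⟨hEup ((hInv i).bunE _ _ hi).1, fun a ha => hEup (((hInv i).bunE _ _ hi).2 ha)⟩
  · intro e he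
    rw [huF] at he
    obtain ⟨s, ⟨i, rfl⟩, hi⟩ := he
    exact hEup ((hInv i).finE hi)
  · intro x e h f hf hc
    obtain ⟨i, hi⟩ := (huB x e).1 h
    have heE : e ∈ (c i).E := ((hInv i).bunE _ _ hi).1
    have hfE : f ∈ (c i).E := ((hInv i).bunE _ _ hi).2 hf
    exact (hInv i).p3 x e hi f hf (hcdown hc heE hfE)
  · intro e
    by_cases heE : e ∈ 𝒮.E
    · have : ∃ i, e ∈ (c i).E := by
        rw [huE] at heE
        exact Set.mem_iUnion.1 heE
      obtain ⟨i, hi⟩ := this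
      refine acc_transfer ?_ e ((hInv i).wf e) hi
      intro x e' he' hb
      have := hbdown hb he'
      exact ⟨this, ((hInv i).bunE _ _ this).2⟩
    · refine Acc.intro _ ?_
      rintro f ⟨x, hx, hfx⟩
      obtain ⟨i, hi⟩ := (huB x e).1 hx
      exact absurd (hEup ((hInv i).bunE _ _ hi).1) heE
  · -- pinit
    intro e he f hf hne
    have heE := he.1
    have hfE := hf.1
    rw [huE] at heE hfE
    obtain ⟨s, ⟨i, rfl⟩, hi⟩ := heE
    obtain ⟨t, ⟨j, rfl⟩, hj⟩ := hfE
    have hik : e ∈ (c (max i j)).E := (hsub i (max i j) (le_max_left i j)).1 hi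
    have hjk : f ∈ (c (max i j)).E := (hsub j (max i j) (le_max_right i j)).1 hj
    have hei : e ∈ bInit (c (max i j)) := ⟨hik, fun x hx => he.2 x (hbup hx)⟩
    have hfi : f ∈ bInit (c (max i j)) := ⟨hjk, fun x hx => hf.2 x (hbup hx)⟩
    exact hcup ((hInv (max i j)).pinit e hei f hfi hne)
  · -- p2
    intro e1 e2 e3 h12 h23 hs12 hs23 hne hnb
    obtain ⟨i, hi⟩ := (huC e1 e2).1 h12
    obtain ⟨j, hj⟩ := (huC e2 e3).1 h23
    set k := max i j with hk
    have h1k : e1 ∈ (c k).E := (hsub i k (le_max_left i j)).1 ((hInv i).confE _ _ hi).1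
    have h2k : e2 ∈ (c k).E := (hsub i k (le_max_left i j)).1 ((hInv i).confE _ _ hi).2
    have h3k : e3 ∈ (c k).E := (hsub j k (le_max_right i j)).1 ((hInv j).confE _ _ hj).2
    have h12k : (c k).conflict e1 e2 := hcdown h12 h1k h2k
    have h23k : (c k).conflict e2 e3 := hcdown h23 h2k h3k
    exact hcup ((hInv k).p2 e1 e2 e3 h12k h23k (hsdown hs12 h1k h2k)
      (hsdown hs23 h2k h3k) hne (fun h => hnb (hbup h)))
  · -- p1
    intro e e' h
    obtain ⟨i, hi⟩ := (huC e e').1 h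
    rcases (hInv i).p1 e e' hi with hs | hn
    · exact Or.inl (hsup hs ((hInv i).confE _ _ hi).1 ((hInv i).confE _ _ hi).2)
    · exact Or.inr (nce_mono (fun a b hc => hcup hc) (fun x a hb => hbup hb) hn)

end Star
lemma inv_of_regular {ℰ : BES Ev A} (h : Regular ℰ) : Inv ℰ := by
  induction h with
  | zero => exact inv_zero
  | one e => exact inv_one e
  | act e a => exact inv_act e a
  | choice _ _ hd ih1 ih2 => exact inv_choice hd ih1 ih2
  | seq _ _ hd ih1 ih2 => exact inv_seq hd ih1 ih2
  | par d₁ d₂ _ _ hd hne hd1 hd2 ih1 ih2 => exact inv_par hd ih1 ih2 hne hd1 hd2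
  | star _ _ hst ih1 ih2 =>
    exact inv_star ih1 ih2 hst
      (fun ℰ' ℱ' hI1 hI2 hd => inv_choice hd hI1 hI2)
      (fun ℰ' ℱ' hI1 hI2 hd => inv_seq hd hI1 hI2)
/-- Proposition 9: every regular BES is confusion free. -/
theorem regular_confusionFree {Ev A : Type} (ℰ : BES Ev A) (h : Regular ℰ) :
    ConfusionFree ℰ := by
  exact confusionFree_of_inv (inv_of_regular h)

end PCKA
end

section
/- Let ℰ be a regular bundle event structure. If a configuration x of ℰ contains a final event (x ∩ Φ_ℰ ≠ ∅), then x is maximal in C(ℰ) with respect to set inclusion. -/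
open Classical

namespace PCKA

variable {Ev A : Type}

/-!
Induction on regularity, with the maximality property strengthened by the requirement that
bundles and final events lie inside the event set. In `ℰ + ℱ` a configuration stays inside one
summand, since the first events taken from the two sides would be initial, hence in conflict.
In `ℰ · ℱ` and `ℰ ‖ ℱ` a final event of the composite can only occur after final events of the
components (through the bundles `Φ_ℰ ↦ init ℱ`, resp. `Φ_ℰ ↦ f` and `Φ_ℱ ↦ f`), so each
component is already saturated and the start delimiter `e` (here `d₁`) has occurred.
Renaming preserves the property,
and a Kleene product is the union of a chain of stages built by `+` and `·`.
-/

def BundlesWithin (ℰ : BES Ev A) : Prop :=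
  ∀ s e, ℰ.bundle s e → s ⊆ ℰ.E

structure FinalMaximal (ℰ : BES Ev A) : Prop where
  bundlesWithin : BundlesWithin ℰ
  final_subset : ℰ.final ⊆ ℰ.E
  maximal : ∀ x y, IsConfig ℰ x → IsConfig ℰ y → (x ∩ ℰ.final).Nonempty → x ⊆ y → y = x

structure Embeds (ℰ 𝒢 : BES Ev A) : Prop where
  bundle : ∀ s e, ℰ.bundle s e → 𝒢.bundle s e
  conflict : ∀ e e', ℰ.conflict e e' → 𝒢.conflict e e'

lemma exists_split_first_mem {α : List Ev} {s : Set Ev} (h : ∃ e ∈ α, e ∈ s) :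
    ∃ l a r, α = l ++ a :: r ∧ a ∈ s ∧ ∀ v ∈ l, v ∉ s := by
  obtain ⟨a, ha⟩ := Option.isSome_iff_exists.mp
    (List.find?_isSome (p := fun e => decide (e ∈ s)) |>.mpr (by simpa using h))
  obtain ⟨has, l, r, rfl, hl⟩ := List.find?_eq_some_iff_append.mp ha
  exact ⟨l, a, r, rfl, by simpa using has, fun v hv => by simpa using hl v hv⟩

lemma isTrace_nil (ℰ : BES Ev A) : IsTrace ℰ [] := by
  intro l e r h
  simp at h

lemma isTrace_append_singleton {ℰ : BES Ev A} {α : List Ev} {e : Ev} :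
    IsTrace ℰ (α ++ [e]) ↔ IsTrace ℰ α ∧ e ∈ ℰ.E ∧
      (∀ s, ℰ.bundle s e → ∃ e' ∈ α, e' ∈ s) ∧
      (∀ e' ∈ α, e ≠ e' ∧ ¬ ℰ.conflict e e') := by
  constructor
  · intro h
    refine ⟨fun l e' r hα => h l e' (r ++ [e]) (by simp [hα]), h α e [] rfl⟩
  · rintro ⟨hα, he⟩ l e' r hd
    rcases List.eq_nil_or_concat r with rfl | ⟨r', a, rfl⟩
    · obtain ⟨rfl, he'⟩ := List.append_inj' hd rfl
      obtain rfl : e = e' := by simpa using he'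
      exact he
    · have hd' : α ++ [e] = (l ++ e' :: r') ++ [a] := by rw [hd]; simp
      exact hα l e' r' (List.append_inj' hd' rfl).1

lemma IsTrace.mem_E {ℰ : BES Ev A} {α : List Ev} (h : IsTrace ℰ α) {e : Ev} (he : e ∈ α) :
    e ∈ ℰ.E := by
  obtain ⟨l, r, rfl⟩ := List.append_of_mem he
  exact (h l e r rfl).1

lemma IsConfig.subset_E {ℰ : BES Ev A} {x : Set Ev} (h : IsConfig ℰ x) : x ⊆ ℰ.E := by
  obtain ⟨α, hα, rfl⟩ := h
  exact fun _ => hα.mem_E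

lemma IsConfig.finite {ℰ : BES Ev A} {x : Set Ev} (h : IsConfig ℰ x) : x.Finite := by
  obtain ⟨α, -, rfl⟩ := h
  exact List.finite_toSet α

lemma IsConfig.inter_nonempty_of_bundle {𝒢 : BES Ev A} {x s : Set Ev} {e : Ev}
    (hx : IsConfig 𝒢 x) (he : e ∈ x) (hb : 𝒢.bundle s e) : (x ∩ s).Nonempty := by
  obtain ⟨α, hα, rfl⟩ := hx
  obtain ⟨l, r, rfl⟩ := List.append_of_mem he
  obtain ⟨v, hv, hvs⟩ := (hα l e r rfl).2.1 s hb
  exact ⟨v, List.mem_append_left _ hv, hvs⟩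

lemma IsTrace.restrict {ℰ 𝒢 : BES Ev A} (hℰ : BundlesWithin ℰ) (h𝒢 : Embeds ℰ 𝒢)
    {α : List Ev} (h : IsTrace 𝒢 α) : IsTrace ℰ (listRestrict α ℰ.E) := by
  induction α using List.reverseRecOn with
  | nil => exact isTrace_nil ℰ
  | append_singleton α e ih =>
    obtain ⟨hα, -, hbundle, hprev⟩ := isTrace_append_singleton.mp h
    by_cases he : e ∈ ℰ.E
    · rw [show listRestrict (α ++ [e]) ℰ.E = listRestrict α ℰ.E ++ [e] by
        simp [listRestrict, he]]
      refine isTrace_append_singleton.mpr ⟨ih hα, he, fun s hs => ?_, fun e' he' => ?_⟩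
      · obtain ⟨e', he', he's⟩ := hbundle s (h𝒢.bundle s e hs)
        exact ⟨e', by simp [listRestrict, he', hℰ s e hs he's], he's⟩
      · have he'α : e' ∈ α := (List.mem_filter.mp he').1
        exact ⟨(hprev e' he'α).1, fun hc => (hprev e' he'α).2 (h𝒢.conflict e e' hc)⟩
    · rw [show listRestrict (α ++ [e]) ℰ.E = listRestrict α ℰ.E by simp [listRestrict, he]]
      exact ih hα

lemma IsConfig.inter_E {ℰ 𝒢 : BES Ev A} (hℰ : BundlesWithin ℰ) (h𝒢 : Embeds ℰ 𝒢)
    {x : Set Ev} (hx : IsConfig 𝒢 x) : IsConfig ℰ (x ∩ ℰ.E) := by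
  obtain ⟨α, hα, rfl⟩ := hx
  exact ⟨_, hα.restrict hℰ h𝒢, by ext; simp [listRestrict]⟩

lemma IsConfig.of_embeds {ℰ 𝒢 : BES Ev A} (hℰ : BundlesWithin ℰ) (h𝒢 : Embeds ℰ 𝒢)
    {x : Set Ev} (hx : IsConfig 𝒢 x) (hxE : x ⊆ ℰ.E) : IsConfig ℰ x := by
  simpa [Set.inter_eq_left.mpr hxE] using hx.inter_E hℰ h𝒢

lemma IsTrace.exists_split_first_bInit {ℰ 𝒢 : BES Ev A} (hℰ : BundlesWithin ℰ)
    (h𝒢 : Embeds ℰ 𝒢) {α : List Ev} (h : IsTrace 𝒢 α) (hα : ∃ e ∈ α, e ∈ ℰ.E) :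
    ∃ l a r, α = l ++ a :: r ∧ a ∈ bInit ℰ ∧ ∀ v ∈ l, v ∉ ℰ.E := by
  obtain ⟨l, a, r, rfl, ha, hl⟩ := exists_split_first_mem hα
  refine ⟨l, a, r, rfl, ⟨ha, fun s hs => ?_⟩, hl⟩
  obtain ⟨v, hv, hvs⟩ := (h l a r rfl).2.1 s (h𝒢.bundle s a hs)
  exact hl v hv (hℰ s a hs hvs)

lemma IsConfig.inter_bInit_nonempty {ℰ 𝒢 : BES Ev A} (hℰ : BundlesWithin ℰ)
    (h𝒢 : Embeds ℰ 𝒢) {x : Set Ev} (hx : IsConfig 𝒢 x) (hxE : (x ∩ ℰ.E).Nonempty) :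
    (x ∩ bInit ℰ).Nonempty := by
  obtain ⟨α, hα, rfl⟩ := hx
  obtain ⟨e, he, heE⟩ := hxE
  obtain ⟨l, a, r, rfl, ha, -⟩ := hα.exists_split_first_bInit hℰ h𝒢 ⟨e, he, heE⟩
  exact ⟨a, by simp, ha⟩

/-- The first `ℱ`-event would be initial, hence in conflict with the head. -/
lemma IsTrace.not_mem_of_head_mem {ℰ ℱ 𝒢 : BES Ev A} (hℱ : BundlesWithin ℱ)
    (hℰ𝒢 : Embeds ℰ 𝒢) (hℱ𝒢 : Embeds ℱ 𝒢)
    (hc : ∀ e ∈ bInit ℰ, ∀ f ∈ bInit ℱ, 𝒢.conflict f e)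
    {a : Ev} {α : List Ev} (h : IsTrace 𝒢 (a :: α)) (haℰ : a ∈ ℰ.E) (haℱ : a ∉ ℱ.E) :
    ∀ v ∈ a :: α, v ∉ ℱ.E := by
  intro v hv hvℱ
  have ha : a ∈ bInit ℰ := by
    refine ⟨haℰ, fun s hs => ?_⟩
    simpa using (h [] a α rfl).2.1 s (hℰ𝒢.bundle s a hs)
  obtain ⟨l, f, r, hsplit, hf, -⟩ := h.exists_split_first_bInit hℱ hℱ𝒢 ⟨v, hv, hvℱ⟩
  cases l with
  | nil =>
    obtain ⟨rfl, -⟩ := List.cons_eq_cons.mp hsplit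
    exact haℱ hf.1
  | cons b l =>
    obtain ⟨rfl, -⟩ := List.cons_eq_cons.mp hsplit
    exact ((h (a :: l) f r hsplit).2.2 a (by simp)).2 (hc a ha f hf)

lemma embeds_bchoice_left (ℰ ℱ : BES Ev A) : Embeds ℰ (bchoice ℰ ℱ) :=
  ⟨fun _ _ => Or.inl, fun _ _ => Or.inl⟩

lemma embeds_bchoice_right (ℰ ℱ : BES Ev A) : Embeds ℱ (bchoice ℰ ℱ) :=
  ⟨fun _ _ => Or.inr, fun _ _ h => Or.inr (Or.inl h)⟩

lemma embeds_bseq_left (ℰ ℱ : BES Ev A) : Embeds ℰ (bseq ℰ ℱ) :=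
  ⟨fun _ _ => Or.inl, fun _ _ => Or.inl⟩

lemma embeds_bseq_right (ℰ ℱ : BES Ev A) : Embeds ℱ (bseq ℰ ℱ) :=
  ⟨fun _ _ h => Or.inr (Or.inl h), fun _ _ => Or.inr⟩

lemma embeds_bpar_left (ℰ ℱ : BES Ev A) (d₁ d₂ : Ev) : Embeds ℰ (bpar ℰ ℱ d₁ d₂) :=
  ⟨fun _ _ => Or.inl, fun _ _ => Or.inl⟩

lemma embeds_bpar_right (ℰ ℱ : BES Ev A) (d₁ d₂ : Ev) : Embeds ℱ (bpar ℰ ℱ d₁ d₂) :=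
  ⟨fun _ _ h => Or.inr (Or.inl h), fun _ _ => Or.inr⟩

lemma IsChainUnion.embeds {c : ℕ → BES Ev A} {𝒮 : BES Ev A} (h : IsChainUnion c 𝒮) (i : ℕ) :
    Embeds (c i) 𝒮 :=
  ⟨fun s e hb => (h.2.2.1 s e).mpr ⟨i, hb⟩, fun e e' hc => (h.2.1 e e').mpr ⟨i, hc⟩⟩

lemma IsConfig.subset_or_subset_of_bchoice {ℰ ℱ : BES Ev A} (hℰ : BundlesWithin ℰ)
    (hℱ : BundlesWithin ℱ) (hd : ℰ.E ∩ ℱ.E = ∅) {x : Set Ev}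
    (hx : IsConfig (bchoice ℰ ℱ) x) : x ⊆ ℰ.E ∨ x ⊆ ℱ.E := by
  obtain ⟨α, hα, rfl⟩ := hx
  have hmem : ∀ v ∈ α, v ∈ ℰ.E ∨ v ∈ ℱ.E := fun v => hα.mem_E
  cases α with
  | nil => exact Or.inl (by simp)
  | cons a α =>
    rcases hmem a (by simp) with haℰ | haℱ
    · have haℱ : a ∉ ℱ.E := fun h => hd.subset ⟨haℰ, h⟩
      have hout := hα.not_mem_of_head_mem hℱ (embeds_bchoice_left ℰ ℱ)
        (embeds_bchoice_right ℰ ℱ) (fun e he f hf => Or.inr (Or.inr (Or.inr (Or.inl ⟨hf, he⟩))))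
        haℰ haℱ
      exact Or.inl fun v hv => (hmem v hv).resolve_right (hout v hv)
    · have haℰ : a ∉ ℰ.E := fun h => hd.subset ⟨h, haℱ⟩
      have hout := hα.not_mem_of_head_mem hℰ (embeds_bchoice_right ℰ ℱ)
        (embeds_bchoice_left ℰ ℱ) (fun f hf e he => Or.inr (Or.inr (Or.inl ⟨he, hf⟩)))
        haℱ haℰ
      exact Or.inr fun v hv => (hmem v hv).resolve_left (hout v hv)

namespace FinalMaximal

lemma inter_E_eq {ℰ 𝒢 : BES Ev A} (hℰ : FinalMaximal ℰ) (h𝒢 : Embeds ℰ 𝒢) {x y : Set Ev}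
    (hx : IsConfig 𝒢 x) (hy : IsConfig 𝒢 y) (hfin : (x ∩ ℰ.final).Nonempty) (hxy : x ⊆ y) :
    y ∩ ℰ.E = x ∩ ℰ.E := by
  obtain ⟨f, hfx, hf⟩ := hfin
  exact hℰ.maximal _ _ (hx.inter_E hℰ.bundlesWithin h𝒢) (hy.inter_E hℰ.bundlesWithin h𝒢)
    ⟨f, ⟨hfx, hℰ.final_subset hf⟩, hf⟩ (Set.inter_subset_inter_left _ hxy)

lemma eq_of_subset_E {ℰ 𝒢 : BES Ev A} (hℰ : FinalMaximal ℰ) (h𝒢 : Embeds ℰ 𝒢)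
    {x y : Set Ev} (hx : IsConfig 𝒢 x) (hy : IsConfig 𝒢 y) (hfin : (x ∩ ℰ.final).Nonempty)
    (hxy : x ⊆ y) (hyE : y ⊆ ℰ.E) : y = x := by
  have h := hℰ.inter_E_eq h𝒢 hx hy hfin hxy
  rw [Set.inter_eq_left.mpr hyE, Set.inter_eq_left.mpr (hxy.trans hyE)] at h
  exact h

lemma of_singleton {ℰ : BES Ev A} {e : Ev} (hE : ℰ.E = {e}) (hF : ℰ.final = {e})
    (hB : ∀ s e', ¬ ℰ.bundle s e') : FinalMaximal ℰ := by
  refine ⟨fun s e' h => absurd h (hB s e'), hF.trans hE.symm |>.le, ?_⟩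
  rintro x y - hy ⟨f, hfx, hf⟩ hxy
  rw [hF] at hf
  subst hf
  refine Set.Subset.antisymm (fun v hv => ?_) hxy
  obtain rfl : v = f := by simpa [hE] using hy.subset_E hv
  exact hfx

lemma zero : FinalMaximal (besZero : BES Ev A) :=
  ⟨fun _ _ h => h.elim, fun _ h => h, fun _ _ _ _ ⟨_, _, hf⟩ => hf.elim⟩

lemma one (e : Ev) : FinalMaximal (besOne e : BES Ev A) :=
  of_singleton rfl rfl fun _ _ h => h

lemma act (e : Ev) (a : A) : FinalMaximal (besAct e a) :=
  of_singleton rfl rfl fun _ _ h => h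

lemma bchoice {ℰ ℱ : BES Ev A} (hℰ : FinalMaximal ℰ) (hℱ : FinalMaximal ℱ)
    (hd : ℰ.E ∩ ℱ.E = ∅) : FinalMaximal (bchoice ℰ ℱ) := by
  refine ⟨?_, Set.union_subset_union hℰ.final_subset hℱ.final_subset, ?_⟩
  · rintro s e (hb | hb)
    · exact (hℰ.bundlesWithin s e hb).trans Set.subset_union_left
    · exact (hℱ.bundlesWithin s e hb).trans Set.subset_union_right
  · intro x y hx hy ⟨f, hfx, hf⟩ hxy
    have hside := hy.subset_or_subset_of_bchoice hℰ.bundlesWithin hℱ.bundlesWithin hd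
    rcases hf with hf | hf
    · have hfℰ := hℰ.final_subset hf
      exact hℰ.eq_of_subset_E (embeds_bchoice_left ℰ ℱ) hx hy ⟨f, hfx, hf⟩ hxy
        (hside.resolve_right fun hyℱ => hd.subset ⟨hfℰ, hyℱ (hxy hfx)⟩)
    · have hfℱ := hℱ.final_subset hf
      exact hℱ.eq_of_subset_E (embeds_bchoice_right ℰ ℱ) hx hy ⟨f, hfx, hf⟩ hxy
        (hside.resolve_left fun hyℰ => hd.subset ⟨hyℰ (hxy hfx), hfℱ⟩)

lemma bseq {ℰ ℱ : BES Ev A} (hℰ : FinalMaximal ℰ) (hℱ : FinalMaximal ℱ) :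
    FinalMaximal (bseq ℰ ℱ) := by
  refine ⟨?_, hℱ.final_subset.trans Set.subset_union_right, ?_⟩
  · rintro s e (hb | hb | ⟨rfl, -⟩)
    · exact (hℰ.bundlesWithin s e hb).trans Set.subset_union_left
    · exact (hℱ.bundlesWithin s e hb).trans Set.subset_union_right
    · exact hℰ.final_subset.trans Set.subset_union_left
  · intro x y hx hy hfin hxy
    obtain ⟨f, hfx, hf⟩ := hfin
    obtain ⟨a, hax, ha⟩ := hx.inter_bInit_nonempty hℱ.bundlesWithin (embeds_bseq_right ℰ ℱ)
      ⟨f, hfx, hℱ.final_subset hf⟩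
    have hfinℰ := hx.inter_nonempty_of_bundle hax (Or.inr (Or.inr ⟨rfl, ha⟩))
    have hℰeq := hℰ.inter_E_eq (embeds_bseq_left ℰ ℱ) hx hy hfinℰ hxy
    have hℱeq := hℱ.inter_E_eq (embeds_bseq_right ℰ ℱ) hx hy ⟨f, hfx, hf⟩ hxy
    refine Set.Subset.antisymm (fun v hv => ?_) hxy
    rcases hy.subset_E hv with hvℰ | hvℱ
    · exact (hℰeq.le ⟨hv, hvℰ⟩).1
    · exact (hℱeq.le ⟨hv, hvℱ⟩).1

lemma bpar {ℰ ℱ : BES Ev A} (hℰ : FinalMaximal ℰ) (hℱ : FinalMaximal ℱ) (d₁ d₂ : Ev) :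
    FinalMaximal (bpar ℰ ℱ d₁ d₂) := by
  refine ⟨?_, fun e he => Or.inr (Or.inr he), ?_⟩
  · rintro s e (hb | hb | ⟨rfl, -⟩ | ⟨rfl, -⟩ | ⟨rfl, -⟩)
    · exact fun v hv => Or.inl (Or.inl (hℰ.bundlesWithin s e hb hv))
    · exact fun v hv => Or.inl (Or.inr (hℱ.bundlesWithin s e hb hv))
    · exact fun v hv => Or.inr (Or.inl hv)
    · exact fun v hv => Or.inl (Or.inl (hℰ.final_subset hv))
    · exact fun v hv => Or.inl (Or.inr (hℱ.final_subset hv))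
  · intro x y hx hy hfin hxy
    obtain ⟨f, hfx, rfl : f = d₂⟩ := hfin
    have hfinℰ := hx.inter_nonempty_of_bundle hfx (Or.inr (Or.inr (Or.inr (Or.inl ⟨rfl, rfl⟩))))
    have hfinℱ := hx.inter_nonempty_of_bundle hfx (Or.inr (Or.inr (Or.inr (Or.inr ⟨rfl, rfl⟩))))
    have hd₁x : d₁ ∈ x := by
      obtain ⟨φ, hφx, hφ⟩ := hfinℰ
      obtain ⟨a, hax, ha⟩ := hx.inter_bInit_nonempty hℰ.bundlesWithin
        (embeds_bpar_left ℰ ℱ d₁ f) ⟨φ, hφx, hℰ.final_subset hφ⟩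
      obtain ⟨d, hdx, rfl : d = d₁⟩ :=
        hx.inter_nonempty_of_bundle hax (Or.inr (Or.inr (Or.inl ⟨rfl, Or.inl ha⟩)))
      exact hdx
    have hℰeq := hℰ.inter_E_eq (embeds_bpar_left ℰ ℱ d₁ f) hx hy hfinℰ hxy
    have hℱeq := hℱ.inter_E_eq (embeds_bpar_right ℰ ℱ d₁ f) hx hy hfinℱ hxy
    refine Set.Subset.antisymm (fun v hv => ?_) hxy
    rcases hy.subset_E hv with (hvℰ | hvℱ) | rfl | rfl
    · exact (hℰeq.le ⟨hv, hvℰ⟩).1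
    · exact (hℱeq.le ⟨hv, hvℱ⟩).1
    · exact hd₁x
    · exact hfx

end FinalMaximal

lemma IsTrace.exists_of_brename {g : Ev → Ev} {ℰ : BES Ev A} (hℰ : BundlesWithin ℰ)
    (hg : Set.InjOn g ℰ.E) {α : List Ev} (h : IsTrace (brename g ℰ) α) :
    ∃ β, IsTrace ℰ β ∧ α = β.map g := by
  induction α using List.reverseRecOn with
  | nil => exact ⟨[], isTrace_nil ℰ, rfl⟩
  | append_singleton α e ih =>
    obtain ⟨hα, ⟨a, ha, rfl⟩, hbundle, hprev⟩ := isTrace_append_singleton.mp h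
    obtain ⟨β, hβ, rfl⟩ := ih hα
    refine ⟨β ++ [a], isTrace_append_singleton.mpr ⟨hβ, ha, fun s hs => ?_, fun b hb => ?_⟩,
      by simp⟩
    · obtain ⟨_, hv, c, hcs, hcv⟩ := hbundle (g '' s) ⟨s, a, hs, rfl, rfl⟩
      obtain ⟨b, hb, rfl⟩ := List.mem_map.mp hv
      exact ⟨b, hb, hg (hℰ s a hs hcs) (hβ.mem_E hb) hcv ▸ hcs⟩
    · obtain ⟨hne, hnc⟩ := hprev (g b) (List.mem_map_of_mem hb)
      exact ⟨fun hab => hne (hab ▸ rfl), fun hc => hnc ⟨a, b, hc, rfl, rfl⟩⟩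

lemma IsConfig.exists_of_brename {g : Ev → Ev} {ℰ : BES Ev A} (hℰ : BundlesWithin ℰ)
    (hg : Set.InjOn g ℰ.E) {x : Set Ev} (hx : IsConfig (brename g ℰ) x) :
    ∃ x₀, IsConfig ℰ x₀ ∧ x = g '' x₀ := by
  obtain ⟨α, hα, rfl⟩ := hx
  obtain ⟨β, hβ, rfl⟩ := hα.exists_of_brename hℰ hg
  exact ⟨_, ⟨β, hβ, rfl⟩, by ext; simp⟩

namespace FinalMaximal

lemma brename {ℰ : BES Ev A} (hℰ : FinalMaximal ℰ) {g : Ev → Ev} (hg : Set.InjOn g ℰ.E) :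
    FinalMaximal (brename g ℰ) := by
  refine ⟨?_, Set.image_mono hℰ.final_subset, ?_⟩
  · rintro _ _ ⟨s, a, hs, rfl, rfl⟩
    exact Set.image_mono (hℰ.bundlesWithin s a hs)
  · intro x y hx hy hfin hxy
    obtain ⟨x₀, hx₀, rfl⟩ := hx.exists_of_brename hℰ.bundlesWithin hg
    obtain ⟨y₀, hy₀, rfl⟩ := hy.exists_of_brename hℰ.bundlesWithin hg
    change (g '' x₀ ∩ g '' ℰ.final).Nonempty at hfin
    rw [← hg.image_inter hx₀.subset_E hℰ.final_subset, Set.image_nonempty] at hfin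
    rw [hℰ.maximal x₀ y₀ hx₀ hy₀ hfin ((hg.image_subset_image_iff hx₀.subset_E hy₀.subset_E).mp hxy)]

/-- A configuration of a chain union is finite, so it already lives in a single stage. -/
lemma of_isChainUnion {c : ℕ → BES Ev A} {𝒮 : BES Ev A} (hc : ∀ i, FinalMaximal (c i))
    (hsub : ∀ i, SubBES (c i) (c (i + 1))) (hu : IsChainUnion c 𝒮) : FinalMaximal 𝒮 := by
  have hembeds := hu.embeds
  obtain ⟨hE, -, hbundle, -, -, hfinal⟩ := hu
  have hmonoE : Monotone fun i => (c i).E := monotone_nat_of_le_succ fun i => (hsub i).1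
  have hmonoF : Monotone fun i => (c i).final :=
    monotone_nat_of_le_succ fun i f hf => (((hsub i).2.2.2.2.2 f).mp hf).1
  refine ⟨fun s e hb => ?_, ?_, fun x y hx hy ⟨f, hfx, hf⟩ hxy => ?_⟩
  · obtain ⟨i, hbi⟩ := (hbundle s e).mp hb
    exact hE ▸ ((hc i).bundlesWithin s e hbi).trans (Set.subset_iUnion (fun j => (c j).E) i)
  · exact hE ▸ hfinal ▸ Set.iUnion_mono fun i => (hc i).final_subset
  · obtain ⟨k, hfk⟩ := Set.mem_iUnion.mp (hfinal ▸ hf)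
    obtain ⟨i, hyi⟩ := hmonoE.directed_le.exists_mem_subset_of_finset_subset_biUnion
      (s := hy.finite.toFinset) (by simpa [← hE] using hy.subset_E)
    rw [Set.Finite.coe_toFinset] at hyi
    exact (hc (max i k)).eq_of_subset_E (hembeds _) hx hy
      ⟨f, hfx, hmonoF (le_max_right i k) hfk⟩ hxy (hyi.trans (hmonoE (le_max_left i k)))

lemma of_isStarOf {ℰ ℱ 𝒮 : BES Ev A} (hℰ : FinalMaximal ℰ) (hℱ : FinalMaximal ℱ)
    (hs : IsStarOf ℰ ℱ 𝒮) : FinalMaximal 𝒮 := by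
  obtain ⟨c, ⟨g, hg, h0⟩, hstep, hu⟩ := hs
  have hsub : ∀ i, SubBES (c i) (c (i + 1)) := fun i => by
    obtain ⟨-, -, -, -, -, -, -, h⟩ := hstep i
    exact h
  refine of_isChainUnion (fun i => ?_) hsub hu
  induction i with
  | zero => exact h0 ▸ hℱ.brename hg
  | succ i ih =>
    obtain ⟨_, _, ⟨g, hg, rfl⟩, ⟨g', hg', rfl⟩, hd, -, heq, -⟩ := hstep i
    exact heq ▸ (hℱ.brename hg').bchoice ((hℰ.brename hg).bseq ih) hd

end FinalMaximal

lemma Regular.finalMaximal {ℰ : BES Ev A} (h : Regular ℰ) : FinalMaximal ℰ := by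
  induction h with
  | zero => exact .zero
  | one e => exact .one e
  | act e a => exact .act e a
  | choice _ _ hd ihℰ ihℱ => exact ihℰ.bchoice ihℱ hd
  | seq _ _ _ ihℰ ihℱ => exact ihℰ.bseq ihℱ
  | par d₁ d₂ _ _ _ _ _ _ ihℰ ihℱ => exact ihℰ.bpar ihℱ d₁ d₂
  | star _ _ hs ihℰ ihℱ => exact .of_isStarOf ihℰ ihℱ hs

/-- Proposition: in a regular BES, any configuration containing a final event
is maximal among configurations with respect to inclusion. -/
theorem final_config_maximal {Ev A : Type} (ℰ : BES Ev A) (h : Regular ℰ)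
    (x : Set Ev) (hx : IsConfig ℰ x) (hfin : (x ∩ ℰ.final).Nonempty) :
    ∀ y : Set Ev, IsConfig ℰ y → x ⊆ y → y = x :=
  fun y hy hxy => h.finalMaximal.maximal x y hx hy hfin hxy

end PCKA
end
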